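/- arXiv:2604.07207 — 3 statements merged into one kernel-verified Lean document; each statement's English description precedes it below -/
import Mathlib

section
/- Let (g_n)_{n≥1} be i.i.d. μ-distributed random elements of G, independent of the forest process. Define S_0 := e_G and S_n := g_{L(1)}·g_{L(2)}·⋯·g_{L(n)} for n ≥ 1. Then (S_n)_{n≥0} is a step-reinforced random walk with step distribution μ and reinforcement parameter α; precisely, S_1 is μ-distributed, and for every n ≥ 1 and every set B ⊂ G, almost surely ℙ(S_n⁻¹·S_{n+1} ∈ B | S_0, S_1, …, S_n) = (1−α)·μ(B) + α·μ_n(B), where μ_n := (1/n)·∑_{i=1}^n δ_{S_{i−1}⁻¹·S_i} is the empirical distribution of the first n steps. -/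
/-!
Reveal the forest vertex by vertex. The data `(ξ (k+1), u (k+1), g (k+1))` of a new vertex is
independent of that of the vertices `1, …, k`, which determines the walk up to time `k`. If
`ξ (k+1) = 0`, the new vertex starts a cluster of its own and the step is the fresh spin, with
law `μ`. Otherwise it joins the cluster of the uniformly chosen vertex `j = u (k+1) ≤ k`, whose
root is `L j`, so the step `g (L j)` repeats the step taken at time `j`: this contributes `α`
times the empirical distribution of the first `k` steps. Probabilities are computed by summing
over the cylinders that fix the data of the first vertices; by the product formula their masses
add up to `1`, so they partition `Ω` up to a null set.
-/

open MeasureTheory Finset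

/-- the walk obtained from the percolated random recursive forest: `S n = g_{L(1)}⋯g_{L(n)}`,
where `g` are the spins and `L k` is the root of the cluster containing vertex `k`. -/
def forestWalk {G : Type} [Group G] {Ω : Type}
    (g : ℕ → Ω → G) (L : ℕ → Ω → ℕ) (n : ℕ) (ω : Ω) : G :=
  ((List.range n).map fun i => g (L (i + 1) ω) ω).prod

open Function

section Partition
open scoped Classical

variable {ι Ω : Type*} {S : Set Ω}

theorem inter_eq_ite_of_forall_mem {E : Set Ω} (hS : ∀ ω ∈ E, ∀ ω' ∈ E, ω ∈ S → ω' ∈ S) :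
    S ∩ E = if E ⊆ S then E else ∅ := by
  split_ifs with hES
  · exact Set.inter_eq_right.2 hES
  refine Set.eq_empty_of_forall_notMem fun ω ⟨hωS, hωE⟩ => hES fun ω' hω' => ?_
  exact hS ω hωE ω' hω' hωS

variable [MeasurableSpace Ω] {P : Measure Ω}

theorem measure_inter_eq_ite_of_forall_mem {E : Set Ω}
    (hS : P E ≠ 0 → ∀ ω ∈ E, ∀ ω' ∈ E, ω ∈ S → ω' ∈ S) :
    P (S ∩ E) = if E ⊆ S then P E else 0 := by
  by_cases hE : P E = 0
  · rw [measure_mono_null Set.inter_subset_right hE, hE, ite_self]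
  rw [inter_eq_ite_of_forall_mem (hS hE), apply_ite P, measure_empty]

/-- Only countably many of the `E i` carry mass, so their union is conull although `ι` may be
uncountable. -/
theorem measure_eq_tsum_ite_subset [IsProbabilityMeasure P] {E : ι → Set Ω}
    (hE : ∀ i, MeasurableSet (E i)) (hdisj : Pairwise (Disjoint on E))
    (hsum : ∑' i, P (E i) = 1) (hS : ∀ i, P (E i) ≠ 0 → ∀ ω ∈ E i, ∀ ω' ∈ E i, ω ∈ S → ω' ∈ S) :
    P S = ∑' i, if E i ⊆ S then P (E i) else 0 := by
  set J := support fun i => P (E i)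
  have : Countable J := (Summable.countable_support_ennreal (by simp [hsum])).to_subtype
  have hdisjJ : Pairwise (Disjoint on fun j : J => E j) :=
    fun j j' hjj' => hdisj (Subtype.coe_injective.ne hjj')
  have hU : P (⋃ j : J, E j)ᶜ = 0 := by
    rw [prob_compl_eq_zero_iff (.iUnion fun j : J => hE j), measure_iUnion hdisjJ fun j => hE j,
      tsum_subtype_support (fun i => P (E i)), hsum]
  have hSE : ∀ j : J, MeasurableSet (S ∩ E j) := fun j => by
    rw [inter_eq_ite_of_forall_mem (hS j j.2)]
    split_ifs
    exacts [hE j, .empty]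
  calc P S = P (⋃ j : J, S ∩ E j) := by rw [← Set.inter_iUnion, measure_inter_conull hU]
    _ = ∑' j : J, P (S ∩ E j) :=
      measure_iUnion (fun j j' hjj' => (hdisjJ hjj').mono inf_le_right inf_le_right) hSE
    _ = ∑' i, if E i ⊆ S then P (E i) else 0 := by
      simp_rw [measure_inter_eq_ite_of_forall_mem (hS _)]
      refine tsum_subtype_eq_of_support_subset (f := fun i => if E i ⊆ S then P (E i) else 0)
        fun i hi => ?_
      contrapose! hi
      simp [show P (E i) = 0 by simpa [J] using hi]

end Partition

/-- The step taken after the positions `s 0, …, s n` when the new vertex has data `(a, j, x)`: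
the fresh spin `x`, or if `a` the step `j`. -/
def nextIncrement {G : Type*} [Group G] (s : ℕ → G) (y : Bool × ℕ × G) : G :=
  if y.1 then (s (y.2.1 - 1))⁻¹ * s y.2.1 else y.2.2

def AttachesBelow {Ω : Type*} (u : ℕ → Ω → ℕ) (m : ℕ) (ω : Ω) : Prop :=
  ∀ k, 2 ≤ k → k ≤ m → 1 ≤ u k ω ∧ u k ω < k

section Forest

variable {G : Type} [Group G] {Ω : Type} {ξ : ℕ → Ω → Bool} {u : ℕ → Ω → ℕ}
  {g : ℕ → Ω → G} {L : ℕ → Ω → ℕ} {ω ω' : Ω} {m : ℕ}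

theorem forestWalk_zero : forestWalk g L 0 ω = 1 := rfl

theorem forestWalk_succ (n : ℕ) :
    forestWalk g L (n + 1) ω = forestWalk g L n ω * g (L (n + 1) ω) ω := by
  simp [forestWalk, List.range_succ]

theorem root_mem_Icc (hL1 : ∀ ω, L 1 ω = 1)
    (hLrec : ∀ ω, ∀ k, 2 ≤ k → L k ω = if ξ k ω = true then L (u k ω) ω else k)
    (hu : AttachesBelow u m ω) : ∀ k, 1 ≤ k → k ≤ m → 1 ≤ L k ω ∧ L k ω ≤ k := by
  intro k
  induction k using Nat.strong_induction_on with
  | _ k ih =>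
    intro hk1 hkm
    obtain rfl | hk2 : k = 1 ∨ 2 ≤ k := by omega
    · simp [hL1]
    rw [hLrec ω k hk2]
    split_ifs
    · have hk := hu k hk2 hkm
      have := ih (u k ω) hk.2 hk.1 (by omega)
      omega
    · omega

theorem root_congr (hL1 : ∀ ω, L 1 ω = 1)
    (hLrec : ∀ ω, ∀ k, 2 ≤ k → L k ω = if ξ k ω = true then L (u k ω) ω else k)
    (hu : AttachesBelow u m ω) (hξu : ∀ k, 2 ≤ k → k ≤ m → ξ k ω = ξ k ω' ∧ u k ω = u k ω') :
    ∀ k, 1 ≤ k → k ≤ m → L k ω = L k ω' := by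
  intro k
  induction k using Nat.strong_induction_on with
  | _ k ih =>
    intro hk1 hkm
    obtain rfl | hk2 : k = 1 ∨ 2 ≤ k := by omega
    · rw [hL1, hL1]
    obtain ⟨hξ, hu'⟩ := hξu k hk2 hkm
    rw [hLrec ω k hk2, hLrec ω' k hk2, ← hξ, ← hu']
    split_ifs
    · have hk := hu k hk2 hkm
      exact ih _ hk.2 hk.1 (by omega)
    · rfl

theorem forestWalk_congr (hL1 : ∀ ω, L 1 ω = 1)
    (hLrec : ∀ ω, ∀ k, 2 ≤ k → L k ω = if ξ k ω = true then L (u k ω) ω else k)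
    (hu : AttachesBelow u m ω) (hξu : ∀ k, 2 ≤ k → k ≤ m → ξ k ω = ξ k ω' ∧ u k ω = u k ω')
    (hg : ∀ i, 1 ≤ i → i ≤ m → g i ω = g i ω') :
    ∀ i ≤ m, forestWalk g L i ω = forestWalk g L i ω'
  | 0, _ => rfl
  | i + 1, hi => by
    have hroot := root_mem_Icc hL1 hLrec hu (i + 1) (by omega) hi
    rw [forestWalk_succ, forestWalk_succ, forestWalk_congr hL1 hLrec hu hξu hg i (by omega),
      ← root_congr hL1 hLrec hu hξu (i + 1) (by omega) hi, hg _ hroot.1 (by omega)]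

theorem forestWalk_succ_eq_mul_nextIncrement
    (hLrec : ∀ ω, ∀ k, 2 ≤ k → L k ω = if ξ k ω = true then L (u k ω) ω else k)
    {n : ℕ} {s : ℕ → G} (hs : ∀ i ≤ n, forestWalk g L i ω = s i)
    (hu : 1 ≤ u (n + 1) ω ∧ u (n + 1) ω ≤ n) :
    forestWalk g L (n + 1) ω =
      s n * nextIncrement s (ξ (n + 1) ω, u (n + 1) ω, g (n + 1) ω) := by
  rw [forestWalk_succ, hs n le_rfl, hLrec ω (n + 1) (by omega), nextIncrement]
  split_ifs
  · obtain ⟨j, hj⟩ : ∃ j, u (n + 1) ω = j + 1 := ⟨_, (Nat.sub_add_cancel hu.1).symm⟩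
    rw [hj, Nat.add_sub_cancel, ← hs j (by omega), ← hs (j + 1) (by omega), forestWalk_succ,
      inv_mul_cancel_left]
  · rfl

end Forest

/-- Data of the vertices `1, …, n + 1`: the spin of vertex `1`, then for each vertex `k ≥ 2`
the triple `(ξ k, u k, g k)`. -/
def Hist (G : Type*) : ℕ → Type _
  | 0 => G
  | n + 1 => Hist G n × Bool × ℕ × G

namespace Hist

variable {G : Type*} {Ω : Type*} (ξ : ℕ → Ω → Bool) (u : ℕ → Ω → ℕ) (g : ℕ → Ω → G)

def single (x : G) : Hist G 0 := x

def snoc {n : ℕ} (h : Hist G n) (y : Bool × ℕ × G) : Hist G (n + 1) := (h, y)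

theorem tsum_succ {n : ℕ} (f : Hist G (n + 1) → ENNReal) :
    ∑' z, f z = ∑' (h : Hist G n) (y : Bool × ℕ × G), f (h.snoc y) :=
  ENNReal.tsum_prod'

def toFun : {n : ℕ} → Hist G n → ℕ → Bool × ℕ × G
  | 0, x => fun _ => (false, 0, x)
  | n + 1, p => update (toFun p.1) (n + 2) p.2

theorem toFun_snoc {n : ℕ} (h : Hist G n) (y : Bool × ℕ × G) :
    (h.snoc y).toFun = update h.toFun (n + 2) y := rfl

def cylinder : {n : ℕ} → Hist G n → Set Ω
  | 0, x => {ω | g 1 ω = x}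
  | n + 1, p => cylinder p.1 ∩ {ω | (ξ (n + 2) ω, u (n + 2) ω, g (n + 2) ω) = p.2}

variable {ξ u g}

theorem cylinder_eq_setOf {n : ℕ} (h : Hist G n) :
    h.cylinder ξ u g = {ω | (∀ k, 2 ≤ k → k ≤ n + 1 →
      ξ k ω = (h.toFun k).1 ∧ u k ω = (h.toFun k).2.1) ∧
      ∀ i, 1 ≤ i → i ≤ n + 1 → g i ω = (h.toFun i).2.2} := by
  induction n with
  | zero =>
    ext ω
    constructor
    · rintro (hω : g 1 ω = h)
      refine ⟨fun k hk2 hk1 => by omega, fun i hi1 hi1' => ?_⟩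
      obtain rfl : i = 1 := by omega
      exact hω
    · rintro ⟨-, hω⟩
      exact hω 1 le_rfl le_rfl
  | succ n ih =>
    ext ω
    obtain ⟨h, a, j, x⟩ := h
    simp only [cylinder, ih, toFun, Set.mem_inter_iff, Set.mem_ofPred_eq, Prod.mk.injEq]
    constructor
    · rintro ⟨⟨hξu, hg⟩, ha, hj, hx⟩
      refine ⟨fun k hk2 hk => ?_, fun i hi1 hi => ?_⟩
      · rcases Nat.lt_or_eq_of_le hk with hk | rfl
        · simpa [update_of_ne (show k ≠ n + 2 by omega)] using hξu k hk2 (by omega)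
        · simp [ha, hj]
      · rcases Nat.lt_or_eq_of_le hi with hi | rfl
        · simpa [update_of_ne (show i ≠ n + 2 by omega)] using hg i hi1 (by omega)
        · simp [hx]
    · rintro ⟨hξu, hg⟩
      refine ⟨⟨fun k hk2 hk => ?_, fun i hi1 hi => ?_⟩, ?_⟩
      · simpa [update_of_ne (show k ≠ n + 2 by omega)] using hξu k hk2 (by omega)
      · simpa [update_of_ne (show i ≠ n + 2 by omega)] using hg i hi1 (by omega)
      · have hξu := hξu (n + 2) (by omega) le_rfl
        have hg := hg (n + 2) (by omega) le_rfl
        simp only [update_self] at hξu hg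
        exact ⟨hξu.1, hξu.2, hg⟩

theorem measurableSet_cylinder [MeasurableSpace Ω] (hmξ : ∀ k b, MeasurableSet {ω | ξ k ω = b})
    (hmu : ∀ k j, MeasurableSet {ω | u k ω = j}) (hmg : ∀ k x, MeasurableSet {ω | g k ω = x}) :
    ∀ {n : ℕ} (h : Hist G n), MeasurableSet (h.cylinder ξ u g)
  | 0, x => hmg 1 x
  | n + 1, ⟨h, a, j, x⟩ => by
    simp only [cylinder, Prod.mk.injEq, Set.ofPred_and]
    exact (measurableSet_cylinder hmξ hmu hmg h).inter
      ((hmξ _ a).inter ((hmu _ j).inter (hmg _ x)))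

theorem eq_of_mem_cylinder {ω : Ω} : ∀ {n : ℕ} {h h' : Hist G n},
    ω ∈ h.cylinder ξ u g → ω ∈ h'.cylinder ξ u g → h = h'
  | 0, _, _, hω, hω' => hω.symm.trans hω'
  | _ + 1, _, _, ⟨hω, hy⟩, ⟨hω', hy'⟩ => Prod.ext (eq_of_mem_cylinder hω hω') (hy.symm.trans hy')

theorem pairwise_disjoint_cylinder (n : ℕ) :
    Pairwise (Disjoint on fun h : Hist G n => h.cylinder ξ u g) :=
  fun _ _ hne => Set.disjoint_left.2 fun _ hω hω' => hne (eq_of_mem_cylinder hω hω')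

end Hist

section Weights

variable {G : Type*} {μ : G → ℝ} {α : ℝ}

/-- Law of `(ξ k, u k)`: Bernoulli(α) times uniform on `{1, …, k - 1}`. -/
noncomputable def attachWeight (α : ℝ) (k : ℕ) (a : Bool) (j : ℕ) : ℝ :=
  (if a = true then α else 1 - α) * (if 1 ≤ j ∧ j ≤ k - 1 then 1 / ((k : ℝ) - 1) else 0)

noncomputable def stepWeight (μ : G → ℝ) (α : ℝ) (k : ℕ) (y : Bool × ℕ × G) : ℝ :=
  attachWeight α k y.1 y.2.1 * μ y.2.2

def HasForestLaw {Ω : Type*} [MeasurableSpace Ω] (μ : G → ℝ) (α : ℝ) (P : Measure Ω)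
    (ξ : ℕ → Ω → Bool) (u : ℕ → Ω → ℕ) (g : ℕ → Ω → G) : Prop :=
  ∀ n : ℕ, 1 ≤ n → ∀ (a : ℕ → Bool) (b : ℕ → ℕ) (x : ℕ → G),
    (P {ω | (∀ k, 2 ≤ k → k ≤ n → (ξ k ω = a k ∧ u k ω = b k)) ∧
            (∀ i, 1 ≤ i → i ≤ n → g i ω = x i)}).toReal =
      (∏ k ∈ Icc 2 n, attachWeight α k (a k) (b k)) * ∏ i ∈ Icc 1 n, μ (x i)

theorem attachWeight_nonneg (hα0 : 0 ≤ α) (hα1 : α ≤ 1) (k : ℕ) (a : Bool) (j : ℕ) :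
    0 ≤ attachWeight α k a j := by
  have hbern : 0 ≤ (if a = true then α else 1 - α) := by split_ifs <;> linarith
  have hunif : 0 ≤ (if 1 ≤ j ∧ j ≤ k - 1 then 1 / ((k : ℝ) - 1) else 0) := by
    split_ifs with hj
    · have : (1 : ℝ) < k := by exact_mod_cast (show 1 < k by omega)
      exact (one_div_pos.2 (by linarith)).le
    · rfl
  exact mul_nonneg hbern hunif

theorem mem_Icc_of_stepWeight_ne_zero {k : ℕ} {y : Bool × ℕ × G}
    (hy : stepWeight μ α k y ≠ 0) : 1 ≤ y.2.1 ∧ y.2.1 ≤ k - 1 := by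
  by_contra hj
  simp [stepWeight, attachWeight, hj] at hy

theorem ofReal_stepWeight (hα0 : 0 ≤ α) (hα1 : α ≤ 1) (k : ℕ) (y : Bool × ℕ × G) :
    ENNReal.ofReal (stepWeight μ α k y) =
      ENNReal.ofReal (attachWeight α k y.1 y.2.1) * ENNReal.ofReal (μ y.2.2) :=
  ENNReal.ofReal_mul (attachWeight_nonneg hα0 hα1 _ _ _)

theorem tsum_ofReal_eq_one (hμ0 : ∀ x, 0 ≤ μ x) (hμ1 : HasSum μ 1) :
    ∑' x, ENNReal.ofReal (μ x) = 1 := by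
  rw [← ENNReal.ofReal_tsum_of_nonneg hμ0 hμ1.summable, hμ1.tsum_eq, ENNReal.ofReal_one]

theorem tsum_ofReal_attachWeight_mul {n : ℕ} (a : Bool) (f : ℕ → ENNReal) :
    ∑' j, ENNReal.ofReal (attachWeight α (n + 1) a j) * f j =
      ENNReal.ofReal ((if a = true then α else 1 - α) / n) * ∑ j ∈ Icc 1 n, f j := by
  rw [tsum_eq_sum (s := Icc 1 n), mul_sum]
  · refine sum_congr rfl fun j hj => ?_
    rw [mem_Icc] at hj
    rw [attachWeight, if_pos (show 1 ≤ j ∧ j ≤ n + 1 - 1 by omega), Nat.cast_succ,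
      add_sub_cancel_right, mul_one_div]
  · intro j hj
    rw [mem_Icc] at hj
    simp [attachWeight, hj]

theorem tsum_ofReal_stepWeight (hμ0 : ∀ x, 0 ≤ μ x) (hμ1 : HasSum μ 1) (hα0 : 0 ≤ α)
    (hα1 : α ≤ 1) {n : ℕ} (hn : 1 ≤ n) :
    ∑' y, ENNReal.ofReal (stepWeight μ α (n + 1) y) = 1 := by
  simp_rw [ofReal_stepWeight hα0 hα1, ENNReal.tsum_prod', ENNReal.tsum_mul_left,
    tsum_ofReal_eq_one hμ0 hμ1, tsum_ofReal_attachWeight_mul, tsum_bool]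
  simp only [Bool.false_eq_true, if_false, if_true]
  have hn' : (0 : ℝ) < n := by positivity
  rw [sum_const, Nat.card_Icc, Nat.add_sub_cancel, nsmul_one, ← ENNReal.ofReal_natCast,
    ← ENNReal.ofReal_mul (div_nonneg (by linarith) hn'.le), ← ENNReal.ofReal_mul (by positivity),
    ← ENNReal.ofReal_add (by positivity) (by positivity), ← ENNReal.ofReal_one]
  congr 1
  field_simp
  ring

open scoped Classical in
theorem tsum_ite_nextIncrement_eq [Group G] (hμ0 : ∀ x, 0 ≤ μ x) (hμ1 : HasSum μ 1)
    (hα0 : 0 ≤ α) (hα1 : α ≤ 1) {n : ℕ} (hn : 1 ≤ n) (s : ℕ → G) (β : G) :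
    ∑' y, (if nextIncrement s y = β then ENNReal.ofReal (stepWeight μ α (n + 1) y) else 0) =
      ENNReal.ofReal ((1 - α) * μ β +
        α * (Set.ncard {i : ℕ | 1 ≤ i ∧ i ≤ n ∧ (s (i - 1))⁻¹ * s i = β} : ℝ) / n) := by
  have hfresh : ∀ j, ∑' x, (if x = β then ENNReal.ofReal (stepWeight μ α (n + 1) (false, j, x))
      else 0) = ENNReal.ofReal (attachWeight α (n + 1) false j) * ENNReal.ofReal (μ β) :=
    fun j => by rw [tsum_ite_eq, ofReal_stepWeight hα0 hα1]
  have hrepeat : ∀ j, ∑' x, (if (s (j - 1))⁻¹ * s j = β then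
      ENNReal.ofReal (stepWeight μ α (n + 1) (true, j, x)) else 0) =
      ENNReal.ofReal (attachWeight α (n + 1) true j) *
        if (s (j - 1))⁻¹ * s j = β then 1 else 0 := fun j => by
    split_ifs
    · simp_rw [ofReal_stepWeight hα0 hα1, ENNReal.tsum_mul_left, tsum_ofReal_eq_one hμ0 hμ1]
    · simp
  have hcard : Set.ncard {i : ℕ | 1 ≤ i ∧ i ≤ n ∧ (s (i - 1))⁻¹ * s i = β} =
      #{j ∈ Icc 1 n | (s (j - 1))⁻¹ * s j = β} := by
    rw [← Set.ncard_coe_finset]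
    congr 1
    ext i
    simp [and_assoc]
  rw [ENNReal.tsum_prod', tsum_bool]
  simp only [nextIncrement, ENNReal.tsum_prod', Bool.false_eq_true, if_false, if_true, hfresh,
    hrepeat, tsum_ofReal_attachWeight_mul, sum_const, Nat.card_Icc, Nat.add_sub_cancel,
    sum_boole, nsmul_eq_mul, hcard]
  have hfresh_nonneg : 0 ≤ (1 - α) / n := div_nonneg (by linarith) n.cast_nonneg
  rw [← mul_assoc, ← ENNReal.ofReal_natCast, ← ENNReal.ofReal_natCast (#_),
    ← ENNReal.ofReal_mul hfresh_nonneg, ← ENNReal.ofReal_mul (by positivity),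
    ← ENNReal.ofReal_mul (by positivity),
    ← ENNReal.ofReal_add (mul_nonneg (by positivity) (hμ0 β)) (by positivity)]
  congr 1
  field_simp

end Weights

namespace Hist

section Measure

variable {G : Type*} {Ω : Type*} [MeasurableSpace Ω] {P : Measure Ω}
  {μ : G → ℝ} {α : ℝ} {ξ : ℕ → Ω → Bool} {u : ℕ → Ω → ℕ} {g : ℕ → Ω → G}

theorem toReal_measure_cylinder_single (hP : HasForestLaw μ α P ξ u g) (x : G) :
    (P ((single x).cylinder ξ u g)).toReal = μ x := by
  have := hP 1 le_rfl (fun _ => false) (fun _ => 0) (fun _ => x)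
  rw [Icc_self, prod_singleton, Icc_eq_empty (by omega), prod_empty, one_mul] at this
  rw [cylinder_eq_setOf]
  exact this

theorem measure_cylinder_single [IsFiniteMeasure P] (hP : HasForestLaw μ α P ξ u g) (x : G) :
    P ((single x).cylinder ξ u g) = ENNReal.ofReal (μ x) := by
  rw [← toReal_measure_cylinder_single hP, ENNReal.ofReal_toReal (measure_ne_top _ _)]

theorem toReal_measure_cylinder_snoc (hP : HasForestLaw μ α P ξ u g) {n : ℕ} (h : Hist G n)
    (y : Bool × ℕ × G) :
    (P ((h.snoc y).cylinder ξ u g)).toReal =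
      (P (h.cylinder ξ u g)).toReal * stepWeight μ α (n + 2) y := by
  have hlow : ∀ k ∈ Icc 1 (n + 1), update h.toFun (n + 2) y k = h.toFun k :=
    fun k hk => update_of_ne (by grind) _ _
  rw [cylinder_eq_setOf, cylinder_eq_setOf, hP (n + 2) (by omega), hP (n + 1) (by omega),
    prod_Icc_succ_top (show 2 ≤ n + 1 + 1 by omega),
    prod_Icc_succ_top (show 1 ≤ n + 1 + 1 by omega)]
  simp only [toFun_snoc, update_self, stepWeight]
  rw [prod_congr (g := fun k => attachWeight α k (h.toFun k).1 (h.toFun k).2.1) rfl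
      fun k hk => by rw [hlow k (Icc_subset_Icc_left (by omega) hk)],
    prod_congr (s₁ := Icc 1 (n + 1)) (g := fun i => μ (h.toFun i).2.2) rfl
      fun i hi => by rw [hlow i hi]]
  ring

theorem measure_cylinder_snoc [IsFiniteMeasure P] (hP : HasForestLaw μ α P ξ u g) {n : ℕ}
    (h : Hist G n) (y : Bool × ℕ × G) :
    P ((h.snoc y).cylinder ξ u g) =
      P (h.cylinder ξ u g) * ENNReal.ofReal (stepWeight μ α (n + 2) y) := by
  rw [← ENNReal.ofReal_toReal (measure_ne_top P ((h.snoc y).cylinder ξ u g)),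
    toReal_measure_cylinder_snoc hP, ENNReal.ofReal_mul ENNReal.toReal_nonneg,
    ENNReal.ofReal_toReal (measure_ne_top _ _)]

theorem tsum_measure_cylinder [IsFiniteMeasure P] (hP : HasForestLaw μ α P ξ u g)
    (hμ0 : ∀ x, 0 ≤ μ x) (hμ1 : HasSum μ 1) (hα0 : 0 ≤ α) (hα1 : α ≤ 1) :
    ∀ n, ∑' h : Hist G n, P (h.cylinder ξ u g) = 1
  | 0 => by
    change ∑' x : G, P ((single x).cylinder ξ u g) = 1
    simp_rw [measure_cylinder_single hP, tsum_ofReal_eq_one hμ0 hμ1]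
  | n + 1 => by
    simp_rw [tsum_succ, measure_cylinder_snoc hP, ENNReal.tsum_mul_left,
      tsum_ofReal_stepWeight hμ0 hμ1 hα0 hα1 (n := n + 1) (by omega), mul_one]
    exact tsum_measure_cylinder hP hμ0 hμ1 hα0 hα1 n

theorem measure_cylinder_ne_zero_of_snoc [IsFiniteMeasure P] (hP : HasForestLaw μ α P ξ u g)
    {n : ℕ} {h : Hist G n} {y : Bool × ℕ × G} (hne : P ((h.snoc y).cylinder ξ u g) ≠ 0) :
    P (h.cylinder ξ u g) ≠ 0 ∧ 1 ≤ y.2.1 ∧ y.2.1 ≤ n + 1 := by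
  rw [measure_cylinder_snoc hP, mul_ne_zero_iff, ENNReal.ofReal_ne_zero_iff] at hne
  exact ⟨hne.1, mem_Icc_of_stepWeight_ne_zero hne.2.ne'⟩

theorem attachesBelow_of_measure_cylinder_ne_zero [IsFiniteMeasure P]
    (hP : HasForestLaw μ α P ξ u g) {ω : Ω} :
    ∀ {n : ℕ} {h : Hist G n}, P (h.cylinder ξ u g) ≠ 0 → ω ∈ h.cylinder ξ u g →
      AttachesBelow u (n + 1) ω
  | 0, _, _, _, k, hk2, hk => by omega
  | n + 1, ⟨h, a, j, x⟩, hne, ⟨hω, hy⟩, k, hk2, hk => by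
    obtain ⟨hne, hj⟩ := measure_cylinder_ne_zero_of_snoc (h := h) (y := (a, j, x)) hP hne
    rcases Nat.lt_or_eq_of_le hk with hk | rfl
    · exact attachesBelow_of_measure_cylinder_ne_zero hP hne hω k hk2 (by omega)
    · simp only [Set.mem_ofPred_eq, Prod.mk.injEq] at hy hj
      change 1 ≤ u (n + 2) ω ∧ u (n + 2) ω < n + 2
      omega

end Measure

section Walk

variable {G : Type} [Group G] {Ω : Type} [MeasurableSpace Ω] {P : Measure Ω} [IsFiniteMeasure P]
  {μ : G → ℝ} {α : ℝ} {ξ : ℕ → Ω → Bool} {u : ℕ → Ω → ℕ} {g : ℕ → Ω → G} {L : ℕ → Ω → ℕ}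

theorem forestWalk_eq_of_mem_cylinder (hP : HasForestLaw μ α P ξ u g) (hL1 : ∀ ω, L 1 ω = 1)
    (hLrec : ∀ ω, ∀ k, 2 ≤ k → L k ω = if ξ k ω = true then L (u k ω) ω else k) {n : ℕ}
    {h : Hist G n} (hne : P (h.cylinder ξ u g) ≠ 0) {ω ω' : Ω} (hω : ω ∈ h.cylinder ξ u g)
    (hω' : ω' ∈ h.cylinder ξ u g) : ∀ i ≤ n + 1, forestWalk g L i ω = forestWalk g L i ω' := by
  have hu := attachesBelow_of_measure_cylinder_ne_zero hP hne hω
  rw [cylinder_eq_setOf] at hω hω'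
  refine forestWalk_congr hL1 hLrec hu (fun k hk2 hk => ?_) fun i hi1 hi => ?_
  · exact ⟨(hω.1 k hk2 hk).1.trans (hω'.1 k hk2 hk).1.symm,
      (hω.1 k hk2 hk).2.trans (hω'.1 k hk2 hk).2.symm⟩
  · exact (hω.2 i hi1 hi).trans (hω'.2 i hi1 hi).symm

open scoped Classical

theorem measure_eq_tsum_cylinder [IsProbabilityMeasure P] (hP : HasForestLaw μ α P ξ u g)
    (hμ0 : ∀ x, 0 ≤ μ x) (hμ1 : HasSum μ 1) (hα0 : 0 ≤ α) (hα1 : α ≤ 1)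
    (hmξ : ∀ k b, MeasurableSet {ω | ξ k ω = b}) (hmu : ∀ k j, MeasurableSet {ω | u k ω = j})
    (hmg : ∀ k x, MeasurableSet {ω | g k ω = x}) (hL1 : ∀ ω, L 1 ω = 1)
    (hLrec : ∀ ω, ∀ k, 2 ≤ k → L k ω = if ξ k ω = true then L (u k ω) ω else k) {n : ℕ}
    {S : Set Ω} (hS : ∀ ω ω', (∀ i ≤ n + 1, forestWalk g L i ω = forestWalk g L i ω') →
      ω ∈ S → ω' ∈ S) :
    P S = ∑' h : Hist G n, if h.cylinder ξ u g ⊆ S then P (h.cylinder ξ u g) else 0 :=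
  measure_eq_tsum_ite_subset (measurableSet_cylinder hmξ hmu hmg) (pairwise_disjoint_cylinder n)
    (tsum_measure_cylinder hP hμ0 hμ1 hα0 hα1 n)
    fun _ hne _ hω _ hω' => hS _ _ (forestWalk_eq_of_mem_cylinder hP hL1 hLrec hne hω hω')

theorem ite_cylinder_snoc_subset (hP : HasForestLaw μ α P ξ u g) (hL1 : ∀ ω, L 1 ω = 1)
    (hLrec : ∀ ω, ∀ k, 2 ≤ k → L k ω = if ξ k ω = true then L (u k ω) ω else k) {N : ℕ}
    (s : ℕ → G) (β : G) (h : Hist G N) (y : Bool × ℕ × G) :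
    (if (h.snoc y).cylinder ξ u g ⊆ {ω | (∀ i ≤ N + 1, forestWalk g L i ω = s i) ∧
        forestWalk g L (N + 1 + 1) ω = forestWalk g L (N + 1) ω * β}
      then P ((h.snoc y).cylinder ξ u g) else 0) =
    (if h.cylinder ξ u g ⊆ {ω | ∀ i ≤ N + 1, forestWalk g L i ω = s i}
      then P (h.cylinder ξ u g) else 0) *
    if nextIncrement s y = β then ENNReal.ofReal (stepWeight μ α (N + 2) y) else 0 := by
  rw [ite_zero_mul_ite_zero, ← measure_cylinder_snoc hP]
  by_cases hne : P ((h.snoc y).cylinder ξ u g) = 0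
  · simp [hne]
  refine if_congr ?_ rfl rfl
  obtain ⟨hne', hj⟩ := measure_cylinder_ne_zero_of_snoc hP hne
  have hstep : ∀ ω ∈ (h.snoc y).cylinder ξ u g, (∀ i ≤ N + 1, forestWalk g L i ω = s i) →
      forestWalk g L (N + 1 + 1) ω = forestWalk g L (N + 1) ω * nextIncrement s y := by
    rintro ω ⟨-, hy⟩ hA
    have hy : (ξ (N + 1 + 1) ω, u (N + 1 + 1) ω, g (N + 1 + 1) ω) = y := hy
    subst hy
    rw [forestWalk_succ_eq_mul_nextIncrement hLrec hA hj, hA (N + 1) le_rfl]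
  constructor
  · intro hsub
    obtain ⟨ω, hω⟩ := nonempty_of_measure_ne_zero hne
    obtain ⟨hωA, hωB⟩ := hsub hω
    refine ⟨fun ω' hω' i hi => ?_, mul_left_cancel (hωB.symm.trans (hstep ω hω hωA)).symm⟩
    rw [← forestWalk_eq_of_mem_cylinder hP hL1 hLrec hne' hω.1 hω' i hi, hωA i hi]
  · rintro ⟨hA, rfl⟩ ω hω
    exact ⟨hA hω.1, hstep ω hω (hA hω.1)⟩

end Walk

end Hist

/-- **Proposition 2.2.** Let `(ξ_n)_{n≥2}` be i.i.d. Bernoulli(α), `(u_n)_{n≥2}` independent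
with `u_n` uniform on `{1,…,n−1}`, and `(g_i)_{i≥1}` i.i.d. with law `μ`, all jointly
independent (expressed by the product formula `hjoint`).  Let `L` be the root map of the
percolated random recursive forest: `L 1 = 1` and for `k ≥ 2`, `L k = L (u k)` if `ξ k = 1`
and `L k = k` otherwise.  Then `S n = g_{L(1)}⋯g_{L(n)}` is a step-reinforced random walk
with step distribution `μ` and reinforcement parameter `α`: `S 1` has law `μ`, and
conditionally on any trajectory prefix with positive probability the next increment is
distributed as `(1−α)·μ + α·(empirical distribution of the first n steps)`. -/
theorem forest_construction_is_srrw
    {G : Type} [Group G] (μ : G → ℝ) (hμ0 : ∀ x, 0 ≤ μ x) (hμ1 : HasSum μ 1)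
    (α : ℝ) (hα0 : 0 ≤ α) (hα1 : α < 1)
    {Ω : Type} [MeasurableSpace Ω] (P : Measure Ω) [IsProbabilityMeasure P]
    (ξ : ℕ → Ω → Bool) (u : ℕ → Ω → ℕ) (g : ℕ → Ω → G)
    (hmξ : ∀ k b, MeasurableSet {ω | ξ k ω = b})
    (hmu : ∀ k j, MeasurableSet {ω | u k ω = j})
    (hmg : ∀ k x, MeasurableSet {ω | g k ω = x})
    (hjoint : ∀ n : ℕ, 1 ≤ n → ∀ (a : ℕ → Bool) (b : ℕ → ℕ) (x : ℕ → G),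
      (P {ω | (∀ k, 2 ≤ k → k ≤ n → (ξ k ω = a k ∧ u k ω = b k)) ∧
              (∀ i, 1 ≤ i → i ≤ n → g i ω = x i)}).toReal =
        (∏ k ∈ Finset.Icc 2 n,
          ((if a k = true then α else 1 - α) *
            (if 1 ≤ b k ∧ b k ≤ k - 1 then 1 / ((k : ℝ) - 1) else 0))) *
          ∏ i ∈ Finset.Icc 1 n, μ (x i))
    (L : ℕ → Ω → ℕ) (hL1 : ∀ ω, L 1 ω = 1)
    (hLrec : ∀ ω, ∀ k, 2 ≤ k → L k ω = if ξ k ω = true then L (u k ω) ω else k) :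
    (∀ x : G, (P {ω | forestWalk g L 1 ω = x}).toReal = μ x) ∧
    (∀ n : ℕ, 1 ≤ n → ∀ s : ℕ → G, ∀ bstep : G,
      (P {ω | ∀ i ≤ n, forestWalk g L i ω = s i}).toReal ≠ 0 →
      (P {ω | (∀ i ≤ n, forestWalk g L i ω = s i) ∧
              forestWalk g L (n + 1) ω = forestWalk g L n ω * bstep}).toReal =
        (P {ω | ∀ i ≤ n, forestWalk g L i ω = s i}).toReal *
          ((1 - α) * μ bstep +
            α * (Set.ncard {i : ℕ | 1 ≤ i ∧ i ≤ n ∧ (s (i - 1))⁻¹ * s i = bstep} : ℝ) / n)) := by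
  classical
  refine ⟨fun x => ?_, fun n hn s β _ => ?_⟩
  · have hS1 : {ω | forestWalk g L 1 ω = x} = (Hist.single x).cylinder ξ u g := by
      ext ω
      simp [forestWalk_succ, forestWalk_zero, hL1, Hist.cylinder, Hist.single]
    rw [hS1]
    exact Hist.toReal_measure_cylinder_single hjoint x
  obtain ⟨N, rfl⟩ : ∃ N, n = N + 1 := ⟨n - 1, by omega⟩
  have hA := Hist.measure_eq_tsum_cylinder hjoint hμ0 hμ1 hα0 hα1.le hmξ hmu hmg hL1 hLrec
    (n := N) (S := {ω | ∀ i ≤ N + 1, forestWalk g L i ω = s i})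
    fun ω ω' hωω' hω i hi => (hωω' i hi).symm.trans (hω i hi)
  have hAB := Hist.measure_eq_tsum_cylinder hjoint hμ0 hμ1 hα0 hα1.le hmξ hmu hmg hL1 hLrec
    (n := N + 1) (S := {ω | (∀ i ≤ N + 1, forestWalk g L i ω = s i) ∧
      forestWalk g L (N + 1 + 1) ω = forestWalk g L (N + 1) ω * β})
    fun ω ω' hωω' hω => ⟨fun i hi => (hωω' i (by omega)).symm.trans (hω.1 i hi), by
      rw [← hωω' _ le_rfl, ← hωω' _ (by omega), hω.2]⟩
  simp_rw [hAB, Hist.tsum_succ, Hist.ite_cylinder_snoc_subset hjoint hL1 hLrec,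
    ENNReal.tsum_mul_left, ENNReal.tsum_mul_right, ← hA,
    tsum_ite_nextIncrement_eq hμ0 hμ1 hα0 hα1.le (n := N + 1) (by omega)]
  rw [ENNReal.toReal_mul, ENNReal.toReal_ofReal
    (add_nonneg (mul_nonneg (by linarith) (hμ0 β)) (by positivity))]
end

section
/- For every α ∈ [0,1) and every n ≥ 1, ℙ( I(n) ≤ (1−α)·n/8 ) ≤ 5·e^{−3(1−α)n/280}. -/
/-! A deleted vertex `k` of the window `(n/2, n]` (`ξ_k = 0`) is the root of its cluster, and
that cluster is `{k}` unless some later vertex `j` picks `u_j = k`. Hence `I(n) ≥ D - T`, where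
`D` counts the deleted window vertices and `T` the vertices `j ≤ n` whose parent `u_j` is one of
them. Conditionally on `ξ` the parents are independent and uniform, so
`E[e^{θT} | ξ] ≤ exp ((e^θ - 1) ∑_{k deleted} h_k)` with `h_k = ∑_{k < j ≤ n} 1/(j-1)` the
expected number of children of `k`, and the Chernoff bound for `D - T` factorises over the window
into `∏_k (α + (1-α) e^{-c_k})`, `c_k = θ - (e^θ - 1) h_k`. Since `h_k ≤ log ((n-1)/(k-1))`, the
choice `θ = 3/10`, `t = (1-α)n/8` gives the exponent `-3(1-α)n/280` once `n > 140`; for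
`n ≤ 140` the right-hand side is at least `1`. -/

open MeasureTheory Finset

/-- `IsForestRoot ξ u root` : `root k ω` is the label of the root of the connected component
of vertex `k` in the percolated random recursive forest built from `(ξ, u)`:
`root 1 = 1` and, for `k ≥ 2`, `root k = root (u k)` if the edge `{k, u k}` is retained
(`ξ k = 1`), while `root k = k` if it is deleted. -/
def IsForestRoot {Ω : Type} (ξ : ℕ → Ω → Bool) (u : ℕ → Ω → ℕ)
    (root : ℕ → Ω → ℕ) : Prop :=
  (∀ ω, root 1 ω = 1) ∧
  ∀ ω, ∀ k, 2 ≤ k → root k ω = if ξ k ω = true then root (u k ω) ω else k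

/-- `ForestLaw P α ξ u` : under the probability measure `P`, the `(ξ_k)_{k≥2}` are i.i.d.
Bernoulli(α), the `(u_k)_{k≥2}` are independent with `u_k` uniform on `{1,…,k−1}`, and all
these random variables are jointly independent; this is expressed by the finite-dimensional
product formula, together with measurability of the random variables. -/
def ForestLaw {Ω : Type} [MeasurableSpace Ω] (P : Measure Ω) (α : ℝ)
    (ξ : ℕ → Ω → Bool) (u : ℕ → Ω → ℕ) : Prop :=
  (∀ k b, MeasurableSet {ω | ξ k ω = b}) ∧
  (∀ k j, MeasurableSet {ω | u k ω = j}) ∧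
  ∀ n : ℕ, 2 ≤ n → ∀ (a : ℕ → Bool) (b : ℕ → ℕ),
    (P {ω | ∀ k, 2 ≤ k → k ≤ n → (ξ k ω = a k ∧ u k ω = b k)}).toReal =
      ∏ k ∈ Finset.Icc 2 n,
        ((if a k = true then α else 1 - α) *
          (if 1 ≤ b k ∧ b k ≤ k - 1 then 1 / ((k : ℝ) - 1) else 0))

/-- `clusterSize root n j ω = |𝒞_{j,n}|`, the size of the cluster of the forest `𝔽_n`
rooted at `j` (equal to `0` if no cluster is rooted at `j`). -/
def clusterSize {Ω : Type} (root : ℕ → Ω → ℕ) (n j : ℕ) (ω : Ω) : ℕ :=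
  ((Finset.Icc 1 n).filter fun k => root k ω = j).card

/-- `clusterCount root k n ω = N_k(n)`, the number of clusters of size `k` in `𝔽_n`.
In particular `clusterCount root 1 n ω = I(n)` is the number of isolated vertices. -/
def clusterCount {Ω : Type} (root : ℕ → Ω → ℕ) (k n : ℕ) (ω : Ω) : ℕ :=
  ((Finset.Icc 1 n).filter fun j => clusterSize root n j ω = k).card

open Real

theorem measureReal_le_sum_of_partition {Ω ι : Type*} [MeasurableSpace Ω] {P : Measure Ω}
    [IsProbabilityMeasure P] {s : Finset ι} {E : ι → Set Ω}
    (hmeas : ∀ i ∈ s, MeasurableSet (E i)) (hdisj : (s : Set ι).PairwiseDisjoint E)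
    (htotal : ∑ i ∈ s, P.real (E i) = 1) {S : Set Ω} (p : ι → Prop) [DecidablePred p]
    (hp : ∀ i ∈ s, ∀ ω ∈ E i ∩ S, p i) :
    P.real S ≤ ∑ i ∈ s with p i, P.real (E i) := by
  set U := ⋃ i ∈ s, E i
  have hU : MeasurableSet U := s.measurableSet_biUnion hmeas
  have hnull : P.real Uᶜ = 0 := by
    rw [measureReal_compl hU, measureReal_biUnion_finset hdisj hmeas, htotal, probReal_univ,
      sub_self]
  have hcover : S ⊆ (⋃ i ∈ s.filter p, E i) ∪ Uᶜ := by
    intro ω hω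
    by_cases hωU : ω ∈ U
    · obtain ⟨i, hi, hωi⟩ : ∃ i ∈ s, ω ∈ E i := by simpa [U] using hωU
      exact Or.inl (Set.mem_biUnion (mem_filter.mpr ⟨hi, hp i hi ω ⟨hωi, hω⟩⟩) hωi)
    · exact Or.inr hωU
  calc P.real S ≤ P.real ((⋃ i ∈ s.filter p, E i) ∪ Uᶜ) := measureReal_mono hcover
    _ ≤ P.real (⋃ i ∈ s.filter p, E i) + P.real Uᶜ := measureReal_union_le _ _
    _ ≤ ∑ i ∈ s with p i, P.real (E i) := by
      rw [hnull, add_zero]; exact measureReal_biUnion_finset_le _ _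

theorem ite_le_exp_mul_sub {θ w : ℝ} (hθ : 0 ≤ θ) (hw : 0 ≤ w) (x t : ℝ) :
    (if x ≤ t then w else 0) ≤ exp (θ * (t - x)) * w := by
  split_ifs with h
  · exact le_mul_of_one_le_left hw (one_le_exp (mul_nonneg hθ (sub_nonneg.mpr h)))
  · positivity

theorem inv_card_mul_sum_ite_le_exp {ι : Type*} (t S : Finset ι) [DecidablePred (· ∈ S)]
    (q : ℝ) :
    (#t : ℝ)⁻¹ * ∑ v ∈ t, (if v ∈ S then q else 1) ≤ exp ((q - 1) * #(t.filter (· ∈ S)) / #t) := by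
  rcases t.eq_empty_or_nonempty with rfl | ht
  · simp
  have hsum : ∑ v ∈ t, (if v ∈ S then q else 1) = #t + (q - 1) * #(t.filter (· ∈ S)) := by
    rw [sum_ite, sum_const, sum_const, nsmul_eq_mul, nsmul_eq_mul, mul_one,
      ← card_filter_add_card_filter_not (s := t) (p := (· ∈ S))]
    push_cast; ring
  have hcard : (#t : ℝ) ≠ 0 := by exact_mod_cast ht.card_pos.ne'
  calc (#t : ℝ)⁻¹ * ∑ v ∈ t, (if v ∈ S then q else 1)
      = (q - 1) * #(t.filter (· ∈ S)) / #t + 1 := by rw [hsum]; field_simp; ring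
    _ ≤ _ := add_one_le_exp _

theorem prod_add_mul_le_exp_neg_sum {ι : Type*} (s : Finset ι) {α : ℝ} (hα0 : 0 ≤ α)
    (hα1 : α ≤ 1) (x : ι → ℝ) (hx : ∀ i ∈ s, 0 ≤ x i) :
    ∏ i ∈ s, (α + (1 - α) * x i) ≤ exp (-((1 - α) * ∑ i ∈ s, (1 - x i))) := by
  calc ∏ i ∈ s, (α + (1 - α) * x i) ≤ ∏ i ∈ s, exp (-((1 - α) * (1 - x i))) :=
        prod_le_prod (fun i hi => add_nonneg hα0 (mul_nonneg (sub_nonneg.mpr hα1) (hx i hi)))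
          fun i _ => by linarith [add_one_le_exp (-((1 - α) * (1 - x i)))]
    _ = exp (-((1 - α) * ∑ i ∈ s, (1 - x i))) := by
      rw [← exp_sum, mul_sum, sum_neg_distrib]

theorem div_one_add_le_one_sub_exp_neg {c₀ c : ℝ} (hc₀ : 0 ≤ c₀) (h : c₀ ≤ c) :
    c₀ / (1 + c₀) ≤ 1 - exp (-c) := by
  have : exp (-c) ≤ (1 + c₀)⁻¹ := by
    rw [exp_neg]
    exact inv_anti₀ (by positivity) (by linarith [add_one_le_exp c])
  have hsplit : c₀ / (1 + c₀) = 1 - (1 + c₀)⁻¹ := by field_simp; ring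
  linarith

theorem exp_three_lt : exp 3 < 20.09 := by
  have h : exp 3 = exp 1 ^ 3 := by rw [← exp_nat_mul]; norm_num
  rw [h]
  calc exp 1 ^ 3 < 2.7182818286 ^ 3 := by gcongr; exact exp_one_lt_d9
    _ < 20.09 := by norm_num

theorem exp_three_tenths_le : exp (3 / 10) ≤ 27 / 20 := by
  refine le_of_pow_le_pow_left₀ (n := 10) (by norm_num) (by norm_num) ?_
  rw [← exp_nat_mul]
  norm_num
  linarith [exp_three_lt]

theorem exp_three_halves_le : exp (3 / 2) ≤ 5 := by
  refine le_of_pow_le_pow_left₀ (n := 2) (by norm_num) (by norm_num) ?_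
  rw [← exp_nat_mul]
  norm_num
  linarith [exp_three_lt]

variable {Ω : Type}

def deletedIn (s : Finset ℕ) (a : ℕ → Bool) : Finset ℕ := s.filter fun k => a k = false

def parentHits (n : ℕ) (S : Finset ℕ) (b : ℕ → ℕ) : Finset ℕ :=
  (Icc 2 n).filter fun j => b j ∈ S

def isolatedLowerBound (n : ℕ) (s : Finset ℕ) (a : ℕ → Bool) (b : ℕ → ℕ) : ℝ :=
  #(deletedIn s a) - #(parentHits n (deletedIn s a) b)

section Forest

variable {ξ : ℕ → Ω → Bool} {u : ℕ → Ω → ℕ} {root : ℕ → Ω → ℕ} {n : ℕ} {ω : Ω}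

theorem root_mem_insert_image (hroot : IsForestRoot ξ u root)
    (hu : ∀ j ∈ Icc 2 n, u j ω ∈ Ico 1 j) :
    ∀ k ∈ Icc 1 n, root k ω ∈ insert k ((Icc 2 n).image (u · ω)) := by
  intro k
  induction k using Nat.strong_induction_on with
  | _ k ih =>
    intro hk
    obtain ⟨hk1, hkn⟩ := mem_Icc.mp hk
    rcases hk1.eq_or_lt with rfl | hk2
    · simp [hroot.1 ω]
    rw [hroot.2 ω k hk2]
    split_ifs
    · have hkmem : k ∈ Icc 2 n := mem_Icc.mpr ⟨hk2, hkn⟩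
      obtain ⟨hu1, hu2⟩ := mem_Ico.mp (hu k hkmem)
      rcases mem_insert.mp (ih _ hu2 (mem_Icc.mpr ⟨hu1, by omega⟩)) with h | h
      · rw [h]; exact mem_insert_of_mem (mem_image_of_mem _ hkmem)
      · exact mem_insert_of_mem h
    · exact mem_insert_self _ _

theorem clusterSize_eq_one (hroot : IsForestRoot ξ u root) (hu : ∀ j ∈ Icc 2 n, u j ω ∈ Ico 1 j)
    {k : ℕ} (hk : k ∈ Icc 2 n) (hdel : ξ k ω = false)
    (hchild : k ∉ (Icc 2 n).image (u · ω)) : clusterSize root n k ω = 1 := by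
  rw [clusterSize, card_eq_one]
  refine ⟨k, ext fun k' => ?_⟩
  simp only [mem_filter, mem_singleton]
  constructor
  · rintro ⟨hk', hrk'⟩
    have := root_mem_insert_image hroot hu k' hk'
    rw [hrk'] at this
    exact ((mem_insert.mp this).resolve_right hchild).symm
  · rintro rfl
    obtain ⟨hk2, hkn⟩ := mem_Icc.mp hk
    exact ⟨mem_Icc.mpr ⟨by omega, hkn⟩, by simp [hroot.2 ω k' hk2, hdel]⟩

theorem isolatedLowerBound_le_clusterCount (hroot : IsForestRoot ξ u root)
    (hu : ∀ j ∈ Icc 2 n, u j ω ∈ Ico 1 j) {s : Finset ℕ} (hs : s ⊆ Icc 2 n) :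
    isolatedLowerBound n s (ξ · ω) (u · ω) ≤ clusterCount root 1 n ω := by
  set S := deletedIn s (ξ · ω)
  set H := parentHits n S (u · ω)
  have hiso : S \ H.image (u · ω) ⊆ (Icc 1 n).filter fun j => clusterSize root n j ω = 1 := by
    intro k hk
    obtain ⟨hkS, hkH⟩ := mem_sdiff.mp hk
    obtain ⟨hks, hdel⟩ := mem_filter.mp hkS
    refine mem_filter.mpr ⟨Icc_subset_Icc_left one_le_two (hs hks),
      clusterSize_eq_one hroot hu (hs hks) hdel fun himg => hkH ?_⟩
    obtain ⟨j, hj, hjk⟩ := mem_image.mp himg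
    exact mem_image.mpr ⟨j, mem_filter.mpr ⟨hj, by simpa only [hjk]⟩, hjk⟩
  have : #S ≤ clusterCount root 1 n ω + #H :=
    card_le_card_sdiff_add_card.trans (add_le_add (card_le_card hiso) card_image_le)
  rw [isolatedLowerBound, sub_le_iff_le_add]
  exact_mod_cast this

end Forest

theorem isolatedLowerBound_congr {n : ℕ} {s : Finset ℕ} (hs : s ⊆ Icc 2 n) {a a' : ℕ → Bool}
    {b b' : ℕ → ℕ} (ha : ∀ k ∈ Icc 2 n, a k = a' k) (hb : ∀ k ∈ Icc 2 n, b k = b' k) :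
    isolatedLowerBound n s a b = isolatedLowerBound n s a' b' := by
  have hD : deletedIn s a = deletedIn s a' := filter_congr fun k hk => by rw [ha k (hs hk)]
  rw [isolatedLowerBound, isolatedLowerBound, hD, parentHits, parentHits,
    filter_congr fun j hj => by rw [hb j hj]]

-- A configuration assigns `(ξ_k, u_k)` to each site `k ∈ [2, n]`; `extendSite` pads it to the
-- functions on `ℕ` that `ForestLaw` and `forestCylinder` take.
abbrev Site (n : ℕ) : Type := ↥(Icc 2 n)

def extendSite {X : Type} (d : X) {n : ℕ} (A : Site n → X) : ℕ → X :=
  fun k => if h : k ∈ Icc 2 n then A ⟨k, h⟩ else d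

@[simp]
theorem extendSite_coe {X : Type} (d : X) {n : ℕ} (A : Site n → X) (k : Site n) :
    extendSite d A k = A k :=
  dif_pos k.2

def parentChoices (n : ℕ) : Finset (Site n → ℕ) := Fintype.piFinset fun k => Icc 1 ((k : ℕ) - 1)

def forestCylinder (ξ : ℕ → Ω → Bool) (u : ℕ → Ω → ℕ) (n : ℕ) (a : ℕ → Bool) (b : ℕ → ℕ) : Set Ω :=
  {ω | ∀ k, 2 ≤ k → k ≤ n → (ξ k ω = a k ∧ u k ω = b k)}

noncomputable def bernoulliWeight (α : ℝ) {n : ℕ} (A : Site n → Bool) : ℝ :=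
  ∏ k, if A k then α else 1 - α

noncomputable def uniformWeight (n : ℕ) : ℝ := ∏ k : Site n, 1 / ((k : ℝ) - 1)

section Weights

variable {n : ℕ}

theorem Site.sub_one_pos (k : Site n) : (0 : ℝ) < (k : ℝ) - 1 := by
  have : (2 : ℝ) ≤ k := by exact_mod_cast (mem_Icc.mp k.2).1
  linarith

theorem sum_bernoulliWeight_mul_prod (α : ℝ) (g : Site n → Bool → ℝ) :
    ∑ A : Site n → Bool, bernoulliWeight α A * ∏ k, g k (A k) =
      ∏ k, (α * g k true + (1 - α) * g k false) := by
  classical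
  have hk : ∀ k, α * g k true + (1 - α) * g k false =
      ∑ b : Bool, (if b then α else 1 - α) * g k b := fun k => by simp
  simp_rw [hk, Fintype.prod_sum, bernoulliWeight, ← prod_mul_distrib]

theorem card_Icc_one_pred (k : Site n) : (#(Icc 1 ((k : ℕ) - 1)) : ℝ) = (k : ℝ) - 1 := by
  have : 1 ≤ (k : ℕ) := by have := (mem_Icc.mp k.2).1; omega
  rw [Nat.card_Icc, Nat.add_sub_cancel, Nat.cast_sub this, Nat.cast_one]

theorem uniformWeight_mul_sum_prod (f : Site n → ℕ → ℝ) :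
    uniformWeight n * ∑ B ∈ parentChoices n, ∏ k, f k (B k) =
      ∏ k : Site n, (#(Icc 1 ((k : ℕ) - 1)) : ℝ)⁻¹ * ∑ v ∈ Icc 1 ((k : ℕ) - 1), f k v := by
  classical
  simp_rw [card_Icc_one_pred, parentChoices, ← prod_univ_sum, uniformWeight, ← prod_mul_distrib,
    one_div]

theorem sum_bernoulliWeight (α : ℝ) : ∑ A : Site n → Bool, bernoulliWeight α A = 1 := by
  simpa using sum_bernoulliWeight_mul_prod α fun _ _ => 1

theorem uniformWeight_mul_card_parentChoices : uniformWeight n * #(parentChoices n) = 1 := by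
  have h := uniformWeight_mul_sum_prod (n := n) fun _ _ => 1
  simp only [prod_const_one, sum_const, nsmul_eq_mul, mul_one] at h
  rw [h]
  exact prod_eq_one fun k _ =>
    inv_mul_cancel₀ (by rw [card_Icc_one_pred]; exact (Site.sub_one_pos k).ne')

theorem bernoulliWeight_nonneg {α : ℝ} (hα0 : 0 ≤ α) (hα1 : α ≤ 1) (A : Site n → Bool) :
    0 ≤ bernoulliWeight α A :=
  prod_nonneg fun k _ => by split_ifs <;> linarith

theorem uniformWeight_nonneg : 0 ≤ uniformWeight n :=
  prod_nonneg fun k _ => one_div_nonneg.mpr (Site.sub_one_pos k).le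

end Weights

section Cylinders

variable {ξ : ℕ → Ω → Bool} {u : ℕ → Ω → ℕ} {n : ℕ}

theorem measurableSet_forestCylinder [MeasurableSpace Ω] (hξ : ∀ k b, MeasurableSet {ω | ξ k ω = b})
    (hu : ∀ k j, MeasurableSet {ω | u k ω = j}) (a : ℕ → Bool) (b : ℕ → ℕ) :
    MeasurableSet (forestCylinder ξ u n a b) := by
  have : forestCylinder ξ u n a b = ⋂ k ∈ Icc 2 n, {ω | ξ k ω = a k} ∩ {ω | u k ω = b k} := by
    ext ω; simp [forestCylinder, and_imp]
  rw [this]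
  exact .biInter (Icc 2 n).countable_toSet fun k _ => (hξ k _).inter (hu k _)

theorem pairwise_disjoint_forestCylinder :
    Pairwise (Function.onFun Disjoint fun c : (Site n → Bool) × (Site n → ℕ) =>
      forestCylinder ξ u n (extendSite true c.1) (extendSite 0 c.2)) := by
  intro c c' hne
  refine Set.disjoint_left.mpr fun ω h h' => hne ?_
  have hsite : ∀ k : Site n, c.1 k = c'.1 k ∧ c.2 k = c'.2 k := fun k => by
    obtain ⟨hk2, hkn⟩ := mem_Icc.mp k.2
    obtain ⟨hξ, hu⟩ := h k hk2 hkn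
    obtain ⟨hξ', hu'⟩ := h' k hk2 hkn
    simp only [extendSite_coe] at hξ hu hξ' hu'
    exact ⟨hξ.symm.trans hξ', hu.symm.trans hu'⟩
  exact Prod.ext (funext fun k => (hsite k).1) (funext fun k => (hsite k).2)

theorem measureReal_forestCylinder [MeasurableSpace Ω] {P : Measure Ω} {α : ℝ}
    (hlaw : ForestLaw P α ξ u) (hn : 2 ≤ n) (A : Site n → Bool) {B : Site n → ℕ}
    (hB : B ∈ parentChoices n) :
    P.real (forestCylinder ξ u n (extendSite true A) (extendSite 0 B)) =
      bernoulliWeight α A * uniformWeight n := by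
  rw [measureReal_def, forestCylinder, hlaw.2.2 n hn, ← prod_coe_sort, bernoulliWeight,
    uniformWeight, ← prod_mul_distrib]
  refine prod_congr rfl fun k _ => ?_
  have hBk := mem_Icc.mp ((Fintype.mem_piFinset.mp hB) k)
  simp only [extendSite_coe, if_pos hBk]

end Cylinders

theorem measureReal_clusterCount_le [MeasurableSpace Ω] {P : Measure Ω} [IsProbabilityMeasure P]
    {α : ℝ} {ξ : ℕ → Ω → Bool} {u : ℕ → Ω → ℕ} {root : ℕ → Ω → ℕ} (hlaw : ForestLaw P α ξ u)
    (hroot : IsForestRoot ξ u root) {n : ℕ} (hn : 2 ≤ n) {s : Finset ℕ} (hs : s ⊆ Icc 2 n)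
    (t : ℝ) :
    P.real {ω | (clusterCount root 1 n ω : ℝ) ≤ t} ≤
      ∑ A : Site n → Bool, ∑ B ∈ parentChoices n,
        if isolatedLowerBound n s (extendSite true A) (extendSite 0 B) ≤ t
        then bernoulliWeight α A * uniformWeight n else 0 := by
  classical
  set E := fun c : (Site n → Bool) × (Site n → ℕ) =>
    forestCylinder ξ u n (extendSite true c.1) (extendSite 0 c.2)
  have htotal : ∑ c ∈ univ ×ˢ parentChoices n, P.real (E c) = 1 := by
    rw [sum_congr rfl fun c hc => measureReal_forestCylinder hlaw hn c.1 (mem_product.mp hc).2,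
      sum_product]
    calc ∑ A, ∑ _B ∈ parentChoices n, bernoulliWeight α A * uniformWeight n
        = (∑ A, bernoulliWeight α A) * (uniformWeight n * #(parentChoices n)) := by
          rw [sum_mul]; exact sum_congr rfl fun A _ => by rw [sum_const, nsmul_eq_mul]; ring
      _ = 1 := by rw [sum_bernoulliWeight, uniformWeight_mul_card_parentChoices, one_mul]
  have hp : ∀ c ∈ univ ×ˢ parentChoices n, ∀ ω ∈ E c ∩ {ω | (clusterCount root 1 n ω : ℝ) ≤ t},
      isolatedLowerBound n s (extendSite true c.1) (extendSite 0 c.2) ≤ t := by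
    rintro c hc ω ⟨hω, hωt⟩
    have hξ : ∀ k ∈ Icc 2 n, ξ k ω = extendSite true c.1 k :=
      fun k hk => (hω k (mem_Icc.mp hk).1 (mem_Icc.mp hk).2).1
    have hu : ∀ k ∈ Icc 2 n, u k ω = extendSite 0 c.2 k :=
      fun k hk => (hω k (mem_Icc.mp hk).1 (mem_Icc.mp hk).2).2
    have hvalid : ∀ j ∈ Icc 2 n, u j ω ∈ Ico 1 j := fun j hj => by
      have hB := mem_Icc.mp (Fintype.mem_piFinset.mp (mem_product.mp hc).2 ⟨j, hj⟩)
      rw [hu j hj, show j = ((⟨j, hj⟩ : Site n) : ℕ) from rfl, extendSite_coe]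
      exact mem_Ico.mpr ⟨hB.1, by omega⟩
    rw [← isolatedLowerBound_congr hs hξ hu]
    exact (isolatedLowerBound_le_clusterCount hroot hvalid hs).trans hωt
  calc P.real {ω | (clusterCount root 1 n ω : ℝ) ≤ t}
      ≤ ∑ c ∈ univ ×ˢ parentChoices n with
          isolatedLowerBound n s (extendSite true c.1) (extendSite 0 c.2) ≤ t, P.real (E c) :=
        measureReal_le_sum_of_partition
          (fun c _ => measurableSet_forestCylinder hlaw.1 hlaw.2.1 _ _)
          (pairwise_disjoint_forestCylinder.set_pairwise _) htotal _ hp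
    _ = _ := by
      rw [sum_filter, sum_product]
      refine sum_congr rfl fun A _ => sum_congr rfl fun B hB => ?_
      rw [measureReal_forestCylinder hlaw hn A hB]

noncomputable def expectedChildren (n k : ℕ) : ℝ := ∑ j ∈ Ioc k n, 1 / ((j : ℝ) - 1)

noncomputable def chernoffExponent (θ : ℝ) (n k : ℕ) : ℝ :=
  θ - (exp θ - 1) * expectedChildren n k

theorem sum_card_filter_div_eq_sum_expectedChildren (n : ℕ) {S : Finset ℕ}
    (hS : ∀ v ∈ S, 1 ≤ v) :
    ∑ k ∈ Icc 2 n, (#((Icc 1 (k - 1)).filter (· ∈ S)) : ℝ) / ((k : ℝ) - 1) =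
      ∑ v ∈ S, expectedChildren n v := by
  simp_rw [div_eq_mul_one_div (#_ : ℝ), ← nsmul_eq_mul, ← sum_const, expectedChildren]
  refine sum_comm' fun k v => ?_
  simp only [mem_Icc, mem_filter, mem_Ioc]
  constructor
  · rintro ⟨⟨hk2, hkn⟩, ⟨hv1, hvk⟩, hv⟩
    exact ⟨⟨by omega, hkn⟩, hv⟩
  · rintro ⟨⟨hvk, hkn⟩, hv⟩
    have := hS v hv
    exact ⟨⟨by omega, hkn⟩, ⟨this, by omega⟩, hv⟩

section Chernoff

variable {n : ℕ}

theorem uniformWeight_mul_sum_exp_card_parentHits_le (θ : ℝ) {S : Finset ℕ}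
    (hS : ∀ v ∈ S, 1 ≤ v) :
    uniformWeight n * ∑ B ∈ parentChoices n, exp (θ * #(parentHits n S (extendSite 0 B))) ≤
      exp ((exp θ - 1) * ∑ v ∈ S, expectedChildren n v) := by
  have hprod : ∀ B : Site n → ℕ, exp (θ * #(parentHits n S (extendSite 0 B))) =
      ∏ k : Site n, (if B k ∈ S then exp θ else 1) := fun B => by
    rw [mul_comm, exp_nat_mul, parentHits, ← prod_const, prod_filter, ← prod_coe_sort]
    exact prod_congr rfl fun k _ => by rw [extendSite_coe]
  rw [sum_congr rfl fun B _ => hprod B,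
    uniformWeight_mul_sum_prod fun _ v => if v ∈ S then exp θ else 1]
  calc ∏ k : Site n, (#(Icc 1 ((k : ℕ) - 1)) : ℝ)⁻¹ *
        ∑ v ∈ Icc 1 ((k : ℕ) - 1), (if v ∈ S then exp θ else 1)
      ≤ ∏ k : Site n, exp ((exp θ - 1) * #((Icc 1 ((k : ℕ) - 1)).filter (· ∈ S)) /
          #(Icc 1 ((k : ℕ) - 1))) :=
        prod_le_prod (fun k _ => by positivity) fun k _ => inv_card_mul_sum_ite_le_exp _ _ _
    _ = exp ((exp θ - 1) * ∑ v ∈ S, expectedChildren n v) := by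
      simp_rw [← exp_sum, card_Icc_one_pred, mul_div_assoc, ← mul_sum]
      rw [sum_coe_sort (Icc 2 n) fun k => (#((Icc 1 (k - 1)).filter (· ∈ S)) : ℝ) / ((k : ℝ) - 1),
        sum_card_filter_div_eq_sum_expectedChildren n hS]

theorem sum_bernoulliWeight_mul_exp_neg_sum (α : ℝ) {s : Finset ℕ} (hs : s ⊆ Icc 2 n)
    (f : ℕ → ℝ) :
    ∑ A : Site n → Bool, bernoulliWeight α A * exp (-∑ v ∈ deletedIn s (extendSite true A), f v) =
      ∏ k ∈ s, (α + (1 - α) * exp (-f k)) := by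
  classical
  have hprod : ∀ A : Site n → Bool, exp (-∑ v ∈ deletedIn s (extendSite true A), f v) =
      ∏ k : Site n, (if (k : ℕ) ∈ s ∧ A k = false then exp (-f k) else 1) := fun A => by
    have hD : deletedIn s (extendSite true A) =
        (Icc 2 n).filter fun k => k ∈ s ∧ extendSite true A k = false := by
      ext k
      simp only [deletedIn, mem_filter]
      exact ⟨fun h => ⟨hs h.1, h⟩, fun h => h.2⟩
    rw [← sum_neg_distrib, exp_sum, hD, prod_filter, ← prod_coe_sort]
    simp only [extendSite_coe]
  simp_rw [hprod]
  rw [sum_bernoulliWeight_mul_prod α fun k b => if (k : ℕ) ∈ s ∧ b = false then exp (-f k) else 1]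
  have hk : ∀ k : Site n, α * (if (k : ℕ) ∈ s ∧ true = false then exp (-f k) else 1) +
      (1 - α) * (if (k : ℕ) ∈ s ∧ false = false then exp (-f k) else 1) =
      if (k : ℕ) ∈ s then α + (1 - α) * exp (-f k) else 1 := fun k => by
    by_cases hks : (k : ℕ) ∈ s <;> simp [hks]
  rw [prod_congr rfl fun k _ => hk k,
    prod_coe_sort (Icc 2 n) fun k => if k ∈ s then α + (1 - α) * exp (-f k) else 1, prod_ite_mem,
    inter_eq_right.mpr hs]

theorem sum_ite_isolatedLowerBound_le {α : ℝ} (hα0 : 0 ≤ α) (hα1 : α ≤ 1) {θ : ℝ} (hθ : 0 ≤ θ)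
    {s : Finset ℕ} (hs : s ⊆ Icc 2 n) (t : ℝ) :
    ∑ A : Site n → Bool, ∑ B ∈ parentChoices n,
        (if isolatedLowerBound n s (extendSite true A) (extendSite 0 B) ≤ t
          then bernoulliWeight α A * uniformWeight n else 0) ≤
      exp (θ * t) * ∏ k ∈ s, (α + (1 - α) * exp (-chernoffExponent θ n k)) := by
  have hS : ∀ A : Site n → Bool, ∀ v ∈ deletedIn s (extendSite true A), 1 ≤ v :=
    fun A v hv => by have := (mem_Icc.mp (hs (mem_filter.mp hv).1)).1; omega
  calc _ ≤ ∑ A : Site n → Bool, ∑ B ∈ parentChoices n,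
          exp (θ * (t - isolatedLowerBound n s (extendSite true A) (extendSite 0 B))) *
            (bernoulliWeight α A * uniformWeight n) :=
        sum_le_sum fun A _ => sum_le_sum fun B _ => ite_le_exp_mul_sub hθ
          (mul_nonneg (bernoulliWeight_nonneg hα0 hα1 A) uniformWeight_nonneg) _ _
    _ = exp (θ * t) * ∑ A : Site n → Bool, bernoulliWeight α A *
          exp (-θ * #(deletedIn s (extendSite true A))) * (uniformWeight n *
            ∑ B ∈ parentChoices n,
              exp (θ * #(parentHits n (deletedIn s (extendSite true A)) (extendSite 0 B)))) := by
      rw [mul_sum]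
      refine sum_congr rfl fun A _ => ?_
      rw [mul_sum, mul_sum, mul_sum]
      refine sum_congr rfl fun B _ => ?_
      rw [isolatedLowerBound, mul_sub, mul_sub, sub_eq_add_neg, neg_sub, sub_eq_add_neg,
        exp_add, exp_add, neg_mul]
      ring
    _ ≤ exp (θ * t) * ∑ A : Site n → Bool, bernoulliWeight α A *
          exp (-θ * #(deletedIn s (extendSite true A))) *
            exp ((exp θ - 1) * ∑ v ∈ deletedIn s (extendSite true A), expectedChildren n v) := by
      gcongr with A
      · exact mul_nonneg (bernoulliWeight_nonneg hα0 hα1 A) (exp_pos _).le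
      · exact uniformWeight_mul_sum_exp_card_parentHits_le θ (hS A)
    _ = exp (θ * t) * ∑ A : Site n → Bool, bernoulliWeight α A *
          exp (-∑ v ∈ deletedIn s (extendSite true A), chernoffExponent θ n v) := by
      refine congrArg _ (sum_congr rfl fun A _ => ?_)
      rw [mul_assoc, ← exp_add]
      simp only [chernoffExponent, sum_sub_distrib, sum_const, nsmul_eq_mul, ← mul_sum]
      ring_nf
    _ = _ := by rw [sum_bernoulliWeight_mul_exp_neg_sum α hs]

end Chernoff

theorem expectedChildren_nonneg (n : ℕ) {k : ℕ} (hk : 1 ≤ k) : 0 ≤ expectedChildren n k :=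
  sum_nonneg fun j hj => by
    have : (k : ℝ) + 1 ≤ j := by exact_mod_cast (mem_Ioc.mp hj).1
    have : (1 : ℝ) ≤ k := by exact_mod_cast hk
    exact one_div_nonneg.mpr (by linarith)

theorem expectedChildren_le_log_sub {k n : ℕ} (hk : 2 ≤ k) (hkn : k ≤ n) :
    expectedChildren n k ≤ log ((n : ℝ) - 1) - log ((k : ℝ) - 1) := by
  induction n, hkn using Nat.le_induction with
  | base => simp [expectedChildren]
  | succ n hkn ih =>
    have hn : (2 : ℝ) ≤ n := by exact_mod_cast hk.trans hkn
    have hstep : 1 / (n : ℝ) ≤ log n - log ((n : ℝ) - 1) := by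
      have h := one_sub_inv_le_log_of_pos (x := n / ((n : ℝ) - 1)) (by apply div_pos <;> linarith)
      rw [log_div (by linarith) (by linarith), inv_div] at h
      calc 1 / (n : ℝ) = 1 - ((n : ℝ) - 1) / n := by field_simp; ring
        _ ≤ _ := h
    rw [expectedChildren, sum_Ioc_succ_top (by omega), ← expectedChildren]
    push_cast
    rw [add_sub_cancel_right]
    linarith

theorem expectedChildren_le_log {k n : ℕ} {r : ℝ} (hk : 2 ≤ k) (hkn : k ≤ n)
    (hr : (n : ℝ) - 1 ≤ r * ((k : ℝ) - 1)) : expectedChildren n k ≤ log r := by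
  have hk1 : (0 : ℝ) < k - 1 := by
    have : (2 : ℝ) ≤ k := by exact_mod_cast hk
    linarith
  have hn1 : (0 : ℝ) < n - 1 := by
    have : (2 : ℝ) ≤ n := by exact_mod_cast hk.trans hkn
    linarith
  have hr0 : 0 < r := pos_of_mul_pos_left (hn1.trans_le hr) hk1.le
  calc expectedChildren n k ≤ log ((n : ℝ) - 1) - log ((k : ℝ) - 1) :=
        expectedChildren_le_log_sub hk hkn
    _ ≤ log (r * ((k : ℝ) - 1)) - log ((k : ℝ) - 1) := by gcongr
    _ = log r := by rw [log_mul hr0.ne' hk1.ne', add_sub_cancel_right]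

theorem le_one_sub_exp_neg_chernoffExponent {n k : ℕ} {r c₀ : ℝ} (hk : 2 ≤ k) (hkn : k ≤ n)
    (hr : (n : ℝ) - 1 ≤ r * ((k : ℝ) - 1)) (hc₀ : 0 ≤ c₀) (hc : c₀ ≤ 3 / 10 - 7 / 20 * log r) :
    c₀ / (1 + c₀) ≤ 1 - exp (-chernoffExponent (3 / 10) n k) := by
  refine div_one_add_le_one_sub_exp_neg hc₀ (hc.trans ?_)
  have h0 := expectedChildren_nonneg n (by omega : 1 ≤ k)
  have hlog := expectedChildren_le_log hk hkn hr
  have hE := exp_three_tenths_le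
  rw [chernoffExponent]
  nlinarith

theorem sum_window_one_sub_exp_neg_ge {n : ℕ} (hn : 11 ≤ n) :
    27 * (n : ℝ) / 560 ≤ ∑ k ∈ Ioc (n / 2) n, (1 - exp (-chernoffExponent (3 / 10) n k)) := by
  -- On `(n/2, 3n/4]` the bound `h_k ≤ log 2` gives `c_k ≥ 57/1000`; on `(3n/4, n]`,
  -- `h_k ≤ log (4/3) ≤ 1/3` gives `c_k ≥ 11/60`.
  rw [← sum_Ioc_consecutive _ (by omega : n / 2 ≤ 3 * n / 4) (by omega : 3 * n / 4 ≤ n)]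
  have hlow : ∀ k ∈ Ioc (n / 2) (3 * n / 4),
      (57 : ℝ) / 1057 ≤ 1 - exp (-chernoffExponent (3 / 10) n k) := by
    intro k hk
    obtain ⟨hk1, hk2⟩ := mem_Ioc.mp hk
    have hr : (n : ℝ) - 1 ≤ 2 * ((k : ℝ) - 1) := by
      have : (n : ℝ) + 1 ≤ 2 * k := by exact_mod_cast (by omega : n + 1 ≤ 2 * k)
      linarith
    have := le_one_sub_exp_neg_chernoffExponent (c₀ := 57 / 1000) (by omega) (by omega) hr
      (by norm_num) (by linarith [log_two_lt_d9])
    norm_num at this ⊢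
    exact this
  have hhigh : ∀ k ∈ Ioc (3 * n / 4) n,
      (11 : ℝ) / 71 ≤ 1 - exp (-chernoffExponent (3 / 10) n k) := by
    intro k hk
    obtain ⟨hk1, hk2⟩ := mem_Ioc.mp hk
    have hr : (n : ℝ) - 1 ≤ 4 / 3 * ((k : ℝ) - 1) := by
      have : 3 * (n : ℝ) + 1 ≤ 4 * k := by exact_mod_cast (by omega : 3 * n + 1 ≤ 4 * k)
      linarith
    have hlog : log (4 / 3) ≤ 1 / 3 := by
      linarith [log_le_sub_one_of_pos (by norm_num : (0 : ℝ) < 4 / 3)]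
    have := le_one_sub_exp_neg_chernoffExponent (c₀ := 11 / 60) (by omega) hk2 hr
      (by norm_num) (by linarith)
    norm_num at this ⊢
    exact this
  have h1 := card_nsmul_le_sum _ _ _ hlow
  have h2 := card_nsmul_le_sum _ _ _ hhigh
  rw [Nat.card_Ioc, nsmul_eq_mul] at h1 h2
  have c1 : (n : ℝ) ≤ 4 * ((3 * n / 4 - n / 2 : ℕ) : ℝ) + 3 := by
    exact_mod_cast (by omega : n ≤ 4 * (3 * n / 4 - n / 2) + 3)
  have c2 : (n : ℝ) ≤ 4 * ((n - 3 * n / 4 : ℕ) : ℝ) := by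
    exact_mod_cast (by omega : n ≤ 4 * (n - 3 * n / 4))
  have : (11 : ℝ) ≤ n := by exact_mod_cast hn
  linarith

/-- **Proposition 3.1, second part.** For every `α ∈ [0,1)` and `n ≥ 1`, the number `I(n)`
of isolated vertices of the percolated random recursive forest `𝔽_n` satisfies
`ℙ(I(n) ≤ (1−α)n/8) ≤ 5·e^{−3(1−α)n/280}`. -/
theorem isolated_count_lower_tail
    (α : ℝ) (hα0 : 0 ≤ α) (hα1 : α < 1)
    {Ω : Type} [MeasurableSpace Ω] (P : Measure Ω) [IsProbabilityMeasure P]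
    (ξ : ℕ → Ω → Bool) (u : ℕ → Ω → ℕ) (root : ℕ → Ω → ℕ)
    (hlaw : ForestLaw P α ξ u) (hroot : IsForestRoot ξ u root) :
    ∀ n : ℕ, 1 ≤ n →
      (P {ω | (clusterCount root 1 n ω : ℝ) ≤ (1 - α) * n / 8}).toReal ≤
        5 * Real.exp (-(3 * (1 - α) * n / 280)) := by
  intro n _
  rcases le_or_gt n 140 with hsmall | hbig
  · have hx : 3 * (1 - α) * n / 280 ≤ 3 / 2 := by
      have : (n : ℝ) ≤ 140 := by exact_mod_cast hsmall
      nlinarith [mul_nonneg hα0 (Nat.cast_nonneg (α := ℝ) n)]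
    calc (P _).toReal ≤ 1 := measureReal_le_one
      _ ≤ 5 * exp (-(3 * (1 - α) * n / 280)) := by
        rw [exp_neg, ← div_eq_mul_inv, one_le_div (exp_pos _)]
        exact (exp_le_exp.mpr hx).trans exp_three_halves_le
  · have hW : Ioc (n / 2) n ⊆ Icc 2 n := fun k hk => by
      obtain ⟨hk1, hk2⟩ := mem_Ioc.mp hk
      exact mem_Icc.mpr ⟨by omega, hk2⟩
    have hwin := mul_le_mul_of_nonneg_left (sum_window_one_sub_exp_neg_ge (by omega : 11 ≤ n))
      (sub_nonneg.mpr hα1.le)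
    calc (P _).toReal ≤ _ := measureReal_clusterCount_le hlaw hroot (by omega) hW _
      _ ≤ exp (3 / 10 * ((1 - α) * n / 8)) *
          ∏ k ∈ Ioc (n / 2) n, (α + (1 - α) * exp (-chernoffExponent (3 / 10) n k)) :=
        sum_ite_isolatedLowerBound_le hα0 hα1.le (by norm_num) hW _
      _ ≤ exp (3 / 10 * ((1 - α) * n / 8)) * exp (-((1 - α) *
          ∑ k ∈ Ioc (n / 2) n, (1 - exp (-chernoffExponent (3 / 10) n k)))) := by
        gcongr
        exact prod_add_mul_le_exp_neg_sum _ hα0 hα1.le _ fun k _ => (exp_pos _).le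
      _ ≤ exp (-(3 * (1 - α) * n / 280)) := by
        rw [← exp_add]
        gcongr
        linarith
      _ ≤ 5 * exp (-(3 * (1 - α) * n / 280)) := by
        linarith [exp_pos (-(3 * (1 - α) * n / 280))]
end

section
/- Fix a positive integer m. There exist positive constants C₁ = C₁(m) and C₂ = C₂(m) such that for every α ∈ [0,1) and every integer k > m² + 1, ℙ( I^{(m)}(k·m) ≤ C₁·(1−α)^m·k ) ≤ e^{−C₂·(1−α)^m·k}, where I^{(m)}(k·m) := ∑_{j=1}^{k} 1{ every vertex of the block {m(j−1)+1, m(j−1)+2, …, m·j} is isolated in 𝔽_{k·m} }. -/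
open MeasureTheory Finset

/-- `I^{(m)}(k·m)`: the number of blocks `{m(j−1)+1, …, m·j}`, `1 ≤ j ≤ k`, all of whose
vertices are isolated in `𝔽_{k·m}`. -/
def blockIsolatedCount {Ω : Type} (root : ℕ → Ω → ℕ) (m k : ℕ) (ω : Ω) : ℕ :=
  ((Finset.Icc 1 k).filter fun j =>
    ∀ v ∈ Finset.Icc (m * (j - 1) + 1) (m * j), clusterSize root (k * m) v ω = 1).card

/-!
Call block `j` *sealed* if none of its vertices keeps its edge and no later vertex chooses its
parent in it; the vertices of a sealed block are isolated. Fix a block `j₁ > k / 2` and condition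
on everything that decides whether the blocks above `j₁` are sealed: `ξ` off block `j₁`, and the
parents `u_i` that lie above block `j₁`. The coordinates remain independent given this
information, and block `j₁` is then sealed with probability at least
`(1 - α)^m (1 - 1/j₁)^(m j₁) ≥ (1 - α)^m e^(-2m) =: p`. Peeling off the blocks of the upper half
one at a time gives `E[2^(-N)] ≤ (1 - p/2)^(k/2)` for the number `N` of sealed blocks there, and
the exponential Markov inequality `P(N ≤ p k / 8) ≤ e^(p k / 8) E[2^(-N)] ≤ e^(-p k / 8)` proves
the theorem with `C₁ = C₂ = e^(-2m) / 8`.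
-/

namespace PercolatedForest

section Conditioning

variable {ι β γ : Type*} [Fintype ι] [DecidableEq ι] [DecidableEq γ]

theorem sum_piFinset_comp_mul_prod (V U : ι → Finset β) (hUV : ∀ i, U i ⊆ V i)
    (σ : ι → β → γ) (w : ι → β → ℝ) (G : (ι → γ) → ℝ) :
    ∑ g ∈ Fintype.piFinset U, G (fun i => σ i (g i)) * ∏ i, w i (g i) =
      ∑ t ∈ Fintype.piFinset fun i => (V i).image (σ i),
        G t * ∏ i, ∑ x ∈ U i with σ i x = t i, w i x := by
  rw [← sum_fiberwise_of_maps_to (g := fun g i => σ i (g i))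
    (t := Fintype.piFinset fun i => (V i).image (σ i))]
  · refine sum_congr rfl fun t _ => ?_
    have hfiber : {g ∈ Fintype.piFinset U | (fun i => σ i (g i)) = t} =
        Fintype.piFinset fun i => {x ∈ U i | σ i x = t i} := by
      ext g
      simp [Fintype.mem_piFinset, funext_iff, forall_and]
    rw [prod_univ_sum, ← hfiber, mul_sum]
    refine sum_congr rfl fun g hg => ?_
    rw [(mem_filter.mp hg).2]
  · intro g hg
    simp only [Fintype.mem_piFinset] at hg ⊢
    exact fun i => mem_image_of_mem _ (hUV i (hg i))

/-- If, coordinatewise, the event `A i` has conditional weight at least `p i` on every fibre of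
`σ i`, then the product event has conditional weight at least `∏ i, p i` given `σ`. -/
theorem prod_mul_sum_le_sum_filter {V : ι → Finset β} {w : ι → β → ℝ}
    (hw : ∀ i, ∀ x ∈ V i, 0 ≤ w i x) (σ : ι → β → γ) (A : ι → β → Prop)
    [∀ i, DecidablePred (A i)] {p : ι → ℝ} (hp : ∀ i, 0 ≤ p i)
    (hfiber : ∀ i c, p i * ∑ x ∈ V i with σ i x = c, w i x ≤
      ∑ x ∈ {x ∈ V i | A i x} with σ i x = c, w i x)
    {G : (ι → γ) → ℝ} (hG : ∀ t, 0 ≤ G t) :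
    (∏ i, p i) * ∑ g ∈ Fintype.piFinset V, G (fun i => σ i (g i)) * ∏ i, w i (g i) ≤
      ∑ g ∈ Fintype.piFinset V with ∀ i, A i (g i),
        G (fun i => σ i (g i)) * ∏ i, w i (g i) := by
  have hfilter : {g ∈ Fintype.piFinset V | ∀ i, A i (g i)} =
      Fintype.piFinset fun i => {x ∈ V i | A i x} := by
    ext g
    simp [Fintype.mem_piFinset, forall_and]
  rw [hfilter, sum_piFinset_comp_mul_prod V V (fun _ => subset_rfl),
    sum_piFinset_comp_mul_prod V _ (fun _ => filter_subset _ _), mul_sum]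
  refine sum_le_sum fun t _ => ?_
  rw [mul_left_comm, ← prod_mul_distrib]
  refine mul_le_mul_of_nonneg_left (prod_le_prod (fun i _ => ?_) fun i _ => hfiber i _)
    (hG t)
  exact mul_nonneg (hp i) (sum_nonneg fun x hx => hw i x (mem_filter.mp hx).1)

theorem mul_sum_filter_le_of_forall {s : Finset β} {w : β → ℝ}
    (hw : ∀ x ∈ s, 0 ≤ w x) {A : β → Prop} [DecidablePred A] {σ : β → γ} {t : γ} {p : ℝ}
    (hp : p ≤ 1) (hA : ∀ x ∈ s, σ x = t → A x) :
    p * ∑ x ∈ s with σ x = t, w x ≤ ∑ x ∈ {x ∈ s | A x} with σ x = t, w x := by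
  have hfilter : {x ∈ {x ∈ s | A x} | σ x = t} = {x ∈ s | σ x = t} := by
    ext x
    simp only [mem_filter]
    exact ⟨fun h => ⟨h.1.1, h.2⟩, fun h => ⟨⟨h.1, hA x h.1 h.2⟩, h.2⟩⟩
  rw [hfilter]
  exact mul_le_of_le_one_left (sum_nonneg fun x hx => hw x (mem_filter.mp hx).1) hp

end Conditioning

/-- A configuration `(ξ_i, u_i)_{2 ≤ i ≤ n}` of the edge variables of `𝔽_n`. -/
abbrev Config (n : ℕ) := Finset.Icc 2 n → Bool × ℕ

def siteValues (i : ℕ) : Finset (Bool × ℕ) := univ ×ˢ Icc 1 (i - 1)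

/-- The factor of `ForestLaw` belonging to the value `x = (ξ_i, u_i)`. -/
noncomputable def siteWeight (α : ℝ) (i : ℕ) (x : Bool × ℕ) : ℝ :=
  (if x.1 = true then α else 1 - α) * (if 1 ≤ x.2 ∧ x.2 ≤ i - 1 then 1 / ((i : ℝ) - 1) else 0)

def configs (n : ℕ) : Finset (Config n) := Fintype.piFinset fun i => siteValues i

noncomputable def configWeight (α : ℝ) {n : ℕ} (g : Config n) : ℝ :=
  ∏ i : Icc 2 n, siteWeight α i (g i)

/-- The dummy value `(false, 0)` off `[2, n]` keeps no edge and points into no block. -/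
def Config.toFun {n : ℕ} (g : Config n) (x : ℕ) : Bool × ℕ :=
  if h : x ∈ Icc 2 n then g ⟨x, h⟩ else (false, 0)

lemma Config.toFun_coe {n : ℕ} (g : Config n) (i : Icc 2 n) : g.toFun i = g i :=
  dif_pos i.2

lemma Config.toFun_of_notMem {n x : ℕ} (g : Config n) (hx : x ∉ Icc 2 n) :
    g.toFun x = (false, 0) :=
  dif_neg hx

section Weights

variable {α : ℝ}

lemma siteWeight_nonneg (hα0 : 0 ≤ α) (hα1 : α ≤ 1) (i : ℕ) (x : Bool × ℕ) :
    0 ≤ siteWeight α i x := by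
  unfold siteWeight
  refine mul_nonneg (by split_ifs <;> linarith) ?_
  split_ifs with h
  · have : (2 : ℝ) ≤ i := by exact_mod_cast (by omega : 2 ≤ i)
    exact div_nonneg zero_le_one (by linarith)
  · exact le_rfl

lemma configWeight_nonneg (hα0 : 0 ≤ α) (hα1 : α ≤ 1) {n : ℕ} (g : Config n) :
    0 ≤ configWeight α g :=
  prod_nonneg fun _ _ => siteWeight_nonneg hα0 hα1 _ _

lemma sum_siteWeight_product {i : ℕ} (S : Finset Bool) {U : Finset ℕ} (hU : U ⊆ Icc 1 (i - 1)) :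
    ∑ x ∈ S ×ˢ U, siteWeight α i x =
      (∑ b ∈ S, if b = true then α else 1 - α) * (#U / ((i : ℝ) - 1)) := by
  rw [sum_product, sum_mul]
  refine sum_congr rfl fun b _ => ?_
  have hterm : ∀ v ∈ U, siteWeight α i (b, v) = (if b = true then α else 1 - α) / ((i : ℝ) - 1) :=
    fun v hv => by
      have := mem_Icc.mp (hU hv)
      simp only [siteWeight, this, and_self, if_true]
      ring
  rw [sum_congr rfl hterm, sum_const, nsmul_eq_mul]
  ring

lemma sum_siteWeight {i : ℕ} (hi : 2 ≤ i) : ∑ x ∈ siteValues i, siteWeight α i x = 1 := by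
  have hi' : (2 : ℝ) ≤ i := by exact_mod_cast hi
  rw [siteValues, sum_siteWeight_product _ subset_rfl, Fintype.sum_bool, Nat.card_Icc,
    Nat.add_sub_cancel, Nat.cast_sub (by omega)]
  have hne : (i : ℝ) - 1 ≠ 0 := by linarith
  simp only [if_true, Bool.false_eq_true, if_false, Nat.cast_one, add_sub_cancel, one_mul]
  exact div_self hne

lemma sum_configWeight (n : ℕ) : ∑ g ∈ configs n, configWeight α g = 1 := by
  unfold configs configWeight
  rw [← prod_univ_sum]
  exact prod_eq_one fun i _ => sum_siteWeight (mem_Icc.mp i.2).1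

end Weights

def observed {Ω : Type} (ξ : ℕ → Ω → Bool) (u : ℕ → Ω → ℕ) (n : ℕ) (ω : Ω) : Config n :=
  fun i => (ξ i ω, u i ω)

section Law

variable {Ω : Type} [MeasurableSpace Ω] {P : Measure Ω} {α : ℝ} {ξ : ℕ → Ω → Bool}
  {u : ℕ → Ω → ℕ}

lemma measurableSet_observed_preimage (hlaw : ForestLaw P α ξ u) (n : ℕ) (g : Config n) :
    MeasurableSet (observed ξ u n ⁻¹' {g}) := by
  have hset : observed ξ u n ⁻¹' {g} =
      ⋂ i : Icc 2 n, {ω | ξ i ω = (g i).1} ∩ {ω | u i ω = (g i).2} := by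
    ext ω
    simp [observed, funext_iff, Prod.ext_iff]
  rw [hset]
  exact MeasurableSet.iInter fun i => (hlaw.1 _ _).inter (hlaw.2.1 _ _)

lemma measure_observed_preimage [IsProbabilityMeasure P] (hlaw : ForestLaw P α ξ u) (n : ℕ)
    (g : Config n) : (P (observed ξ u n ⁻¹' {g})).toReal = configWeight α g := by
  by_cases hn : 2 ≤ n
  · have hset : observed ξ u n ⁻¹' {g} = {ω | ∀ k, 2 ≤ k → k ≤ n →
        ξ k ω = (g.toFun k).1 ∧ u k ω = (g.toFun k).2} := by
      ext ω
      simp only [Set.mem_preimage, Set.mem_singleton_iff, Set.mem_ofPred_eq, funext_iff,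
        observed, Prod.ext_iff]
      constructor
      · intro h k hk2 hkn
        simpa [Config.toFun, hk2, hkn] using h ⟨k, mem_Icc.mpr ⟨hk2, hkn⟩⟩
      · intro h i
        simpa [Config.toFun_coe] using h i (mem_Icc.mp i.2).1 (mem_Icc.mp i.2).2
    rw [hset, hlaw.2.2 n hn, configWeight, ← prod_coe_sort]
    exact prod_congr rfl fun i _ => by rw [Config.toFun_coe]; rfl
  · have : IsEmpty (Icc 2 n) := ⟨fun i => hn ((mem_Icc.mp i.2).1.trans (mem_Icc.mp i.2).2)⟩
    have hset : observed ξ u n ⁻¹' {g} = Set.univ :=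
      Set.eq_univ_of_forall fun ω => Subsingleton.elim _ _
    simp [hset, configWeight]

lemma measure_observed_preimage_configs_compl [IsProbabilityMeasure P] (hlaw : ForestLaw P α ξ u)
    (n : ℕ) : P (observed ξ u n ⁻¹' ↑(configs n))ᶜ = 0 := by
  have hmeas : ∀ g ∈ configs n, MeasurableSet (observed ξ u n ⁻¹' {g}) :=
    fun g _ => measurableSet_observed_preimage hlaw n g
  rw [prob_compl_eq_zero_iff (by
    rw [← set_biUnion_preimage_singleton]; exact measurableSet_biUnion _ hmeas),
    ← sum_measure_preimage_singleton _ hmeas]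
  refine (ENNReal.toReal_eq_one_iff _).mp ?_
  rw [ENNReal.toReal_sum fun _ _ => measure_ne_top _ _]
  simp_rw [measure_observed_preimage hlaw]
  exact sum_configWeight n

lemma measure_toReal_le_sum_configWeight [IsProbabilityMeasure P] (hlaw : ForestLaw P α ξ u)
    {n : ℕ} (S : Config n → Prop) [DecidablePred S] (E : Set Ω)
    (hE : ∀ ω ∈ E, observed ξ u n ω ∈ configs n → S (observed ξ u n ω)) :
    (P E).toReal ≤ ∑ g ∈ configs n with S g, configWeight α g := by
  have hsub : E ⊆ observed ξ u n ⁻¹' ↑{g ∈ configs n | S g} ∪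
      (observed ξ u n ⁻¹' ↑(configs n))ᶜ := by
    intro ω hω
    by_cases h : observed ξ u n ω ∈ configs n
    · exact Or.inl (by simpa [h] using hE ω hω h)
    · exact Or.inr h
  have hle := (measure_mono hsub).trans (measure_union_le (μ := P) _ _)
  rw [measure_observed_preimage_configs_compl hlaw, add_zero,
    ← sum_measure_preimage_singleton _ fun g _ => measurableSet_observed_preimage hlaw n g] at hle
  refine (ENNReal.toReal_mono (ENNReal.sum_ne_top.mpr fun _ _ => measure_ne_top _ _) hle).trans ?_
  rw [ENNReal.toReal_sum fun _ _ => measure_ne_top _ _]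
  simp_rw [measure_observed_preimage hlaw, le_rfl]

end Law

def block (m j : ℕ) : Finset ℕ := Icc (m * (j - 1) + 1) (m * j)

def IsSealedBlock (m n j : ℕ) (c : ℕ → Bool × ℕ) : Prop :=
  (∀ v ∈ block m j, (c v).1 = false) ∧ ∀ w ∈ Ioc (m * j) n, (c w).2 ∉ block m j

instance (m n j : ℕ) (c : ℕ → Bool × ℕ) : Decidable (IsSealedBlock m n j c) := by
  unfold IsSealedBlock; infer_instance

def sealedCount (m n j₀ k : ℕ) (c : ℕ → Bool × ℕ) : ℕ := #{j ∈ Icc j₀ k | IsSealedBlock m n j c}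

lemma two_le_of_mem_block {m j v : ℕ} (hj : 2 ≤ j) (hv : v ∈ block m j) : 2 ≤ v := by
  obtain ⟨hv1, hv2⟩ := mem_Icc.mp hv
  rcases m with _ | m
  · omega
  · have : 1 ≤ (m + 1) * (j - 1) := Nat.one_le_iff_ne_zero.mpr
      (mul_ne_zero m.succ_ne_zero (by omega))
    omega

section Isolation

variable {Ω : Type} {ξ : ℕ → Ω → Bool} {u : ℕ → Ω → ℕ} {root : ℕ → Ω → ℕ}

lemma toFun_observed {n x : ℕ} {ω : Ω} (hx : x ∈ Icc 2 n) :
    (observed ξ u n ω).toFun x = (ξ x ω, u x ω) :=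
  dif_pos hx

lemma clusterSize_eq_one (hroot : IsForestRoot ξ u root) {n v : ℕ} {ω : Ω}
    (hu : ∀ x ∈ Icc 2 n, u x ω ∈ Icc 1 (x - 1)) (hv : v ∈ Icc 2 n) (hξ : ξ v ω = false)
    (hchild : ∀ x ∈ Ioc v n, ξ x ω = true → u x ω ≠ v) :
    clusterSize root n v ω = 1 := by
  obtain ⟨hv2, hvn⟩ := mem_Icc.mp hv
  have hroot_eq : ∀ x, 1 ≤ x → x ≤ n → root x ω = v → x = v := by
    intro x
    induction x using Nat.strong_induction_on with
    | _ x ih =>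
      intro hx1 hxn hx
      rcases Nat.lt_or_ge x 2 with hx2 | hx2
      · rw [show x = 1 by omega, hroot.1] at hx
        omega
      · rw [hroot.2 ω x hx2] at hx
        split_ifs at hx with hξx
        · obtain ⟨hu1, hux⟩ := mem_Icc.mp (hu x (mem_Icc.mpr ⟨hx2, hxn⟩))
          have hparent : u x ω = v := ih _ (by omega) hu1 (by omega) hx
          exact absurd hparent (hchild x (mem_Ioc.mpr ⟨by omega, hxn⟩) hξx)
        · exact hx
  have hcluster : {x ∈ Icc 1 n | root x ω = v} = {v} := by
    ext x
    simp only [mem_filter, mem_Icc, mem_singleton]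
    constructor
    · exact fun ⟨⟨hx1, hxn⟩, hx⟩ => hroot_eq x hx1 hxn hx
    · rintro rfl
      exact ⟨⟨by omega, hvn⟩, by rw [hroot.2 ω x hv2, if_neg (by simp [hξ])]⟩
  rw [clusterSize, hcluster, card_singleton]

lemma clusterSize_eq_one_of_isSealedBlock (hroot : IsForestRoot ξ u root) {m n j : ℕ} {ω : Ω}
    (hobs : observed ξ u n ω ∈ configs n) (hj : 2 ≤ j) (hjn : m * j ≤ n)
    (hsealed : IsSealedBlock m n j (observed ξ u n ω).toFun) {v : ℕ} (hv : v ∈ block m j) :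
    clusterSize root n v ω = 1 := by
  have hu : ∀ x ∈ Icc 2 n, u x ω ∈ Icc 1 (x - 1) := fun x hx =>
    (mem_product.mp (Fintype.mem_piFinset.mp hobs ⟨x, hx⟩)).2
  obtain ⟨hv1, hvj⟩ := mem_Icc.mp hv
  have hvn : v ∈ Icc 2 n := mem_Icc.mpr ⟨two_le_of_mem_block hj hv, hvj.trans hjn⟩
  refine clusterSize_eq_one hroot hu hvn (by simpa [toFun_observed hvn] using hsealed.1 v hv) ?_
  intro x hx hξx hux
  obtain ⟨hvx, hxn⟩ := mem_Ioc.mp hx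
  have hxn' : x ∈ Icc 2 n := mem_Icc.mpr ⟨by omega, hxn⟩
  by_cases hxj : x ∈ block m j
  · simpa [toFun_observed hxn', hξx] using hsealed.1 x hxj
  · have hjx : m * j < x := by
      by_contra h
      exact hxj (mem_Icc.mpr ⟨by omega, by omega⟩)
    have := hsealed.2 x (mem_Ioc.mpr ⟨hjx, hxn⟩)
    rw [toFun_observed hxn', hux] at this
    exact this hv

lemma sealedCount_le_blockIsolatedCount (hroot : IsForestRoot ξ u root) {m k j₀ : ℕ} {ω : Ω}
    (hj₀ : 2 ≤ j₀) (hobs : observed ξ u (k * m) ω ∈ configs (k * m)) :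
    sealedCount m (k * m) j₀ k (observed ξ u (k * m) ω).toFun ≤ blockIsolatedCount root m k ω := by
  refine card_le_card fun j hj => ?_
  obtain ⟨hj, hsealed⟩ := mem_filter.mp hj
  obtain ⟨hj₀j, hjk⟩ := mem_Icc.mp hj
  refine mem_filter.mpr ⟨mem_Icc.mpr ⟨by omega, hjk⟩, fun v hv => ?_⟩
  exact clusterSize_eq_one_of_isSealedBlock hroot hobs (by omega)
    (by rw [mul_comm k]; exact Nat.mul_le_mul_left m hjk) hsealed hv

end Isolation

section Peeling

variable {m j₁ : ℕ} {α : ℝ}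

def mask (m j₁ v : ℕ) : ℕ := if v ≤ m * j₁ then 0 else v

/-- What is kept of `(ξ_i, u_i)` when conditioning on the blocks above `j₁`. -/
def coarsen (m j₁ i : ℕ) (x : Bool × ℕ) : Bool × ℕ :=
  if i ∈ block m j₁ then (false, 0) else (x.1, mask m j₁ x.2)

def SealsAt (m j₁ i : ℕ) (x : Bool × ℕ) : Prop :=
  (i ∈ block m j₁ → x.1 = false) ∧ (m * j₁ < i → x.2 ∉ block m j₁)

instance (m j₁ i : ℕ) (x : Bool × ℕ) : Decidable (SealsAt m j₁ i x) := by
  unfold SealsAt; infer_instance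

/-- A lower bound for the conditional probability of `SealsAt m j₁ i` given `coarsen m j₁ i`. -/
noncomputable def siteBound (m j₁ : ℕ) (α : ℝ) (i : ℕ) : ℝ :=
  if i ∈ block m j₁ then 1 - α else if m * j₁ < i then 1 - 1 / j₁ else 1

lemma notMem_block_of_lt {v : ℕ} (hv : m * j₁ < v) : v ∉ block m j₁ :=
  fun h => by have := (mem_Icc.mp h).2; omega

lemma lt_of_mem_block {j v : ℕ} (hj : j₁ < j) (hv : v ∈ block m j) : m * j₁ < v := by
  have := Nat.mul_le_mul_left m (show j₁ ≤ j - 1 by omega)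
  have := (mem_Icc.mp hv).1
  omega

lemma mask_mem_block_iff {j v : ℕ} (hj : j₁ < j) : mask m j₁ v ∈ block m j ↔ v ∈ block m j := by
  unfold mask
  split_ifs with hv
  · constructor
    · intro h; have := (mem_Icc.mp h).1; omega
    · intro h; have := lt_of_mem_block hj h; omega
  · rfl

lemma isSealedBlock_iff_forall_sealsAt {n : ℕ} (g : Config n) :
    IsSealedBlock m n j₁ g.toFun ↔ ∀ i : Icc 2 n, SealsAt m j₁ i (g i) := by
  constructor
  · intro h i
    obtain ⟨hi2, hin⟩ := mem_Icc.mp i.2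
    refine ⟨fun hi => ?_, fun hi => ?_⟩
    · simpa [Config.toFun_coe] using h.1 i hi
    · simpa [Config.toFun_coe] using h.2 i (mem_Ioc.mpr ⟨hi, hin⟩)
  · intro h
    refine ⟨fun v hv => ?_, fun w hw => ?_⟩
    · by_cases hvn : v ∈ Icc 2 n
      · simpa [Config.toFun, hvn] using (h ⟨v, hvn⟩).1 hv
      · simp [Config.toFun_of_notMem g hvn]
    · by_cases hwn : w ∈ Icc 2 n
      · simpa [Config.toFun, hwn] using (h ⟨w, hwn⟩).2 (mem_Ioc.mp hw).1
      · simp [Config.toFun_of_notMem g hwn, block]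

lemma toFun_coarsen {n x : ℕ} (g : Config n) (hx : x ∉ block m j₁) :
    Config.toFun (fun i => coarsen m j₁ i (g i)) x = ((g.toFun x).1, mask m j₁ (g.toFun x).2) := by
  by_cases hxn : x ∈ Icc 2 n
  · simp [Config.toFun, hxn, coarsen, hx]
  · simp [Config.toFun_of_notMem _ hxn, mask]

lemma isSealedBlock_coarsen {n j : ℕ} (hj : j₁ < j) (g : Config n) :
    IsSealedBlock m n j (Config.toFun fun i => coarsen m j₁ i (g i)) ↔
      IsSealedBlock m n j g.toFun := by
  have hv : ∀ v ∈ block m j, v ∉ block m j₁ := fun v hv =>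
    notMem_block_of_lt (lt_of_mem_block hj hv)
  have hw : ∀ w ∈ Ioc (m * j) n, w ∉ block m j₁ := fun w hw =>
    notMem_block_of_lt ((Nat.mul_le_mul_left m hj.le).trans_lt (mem_Ioc.mp hw).1)
  unfold IsSealedBlock
  refine and_congr (forall₂_congr fun v hvj => ?_) (forall₂_congr fun w hwj => ?_)
  · rw [toFun_coarsen g (hv v hvj)]
  · rw [toFun_coarsen g (hw w hwj), mask_mem_block_iff hj]

lemma siteBound_nonneg (hα1 : α ≤ 1) (hj₁ : 1 ≤ j₁) (i : ℕ) : 0 ≤ siteBound m j₁ α i := by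
  have : 1 / (j₁ : ℝ) ≤ 1 := by rw [div_le_one (by positivity)]; exact_mod_cast hj₁
  unfold siteBound
  split_ifs <;> linarith

end Peeling

section Fibers

variable {m j₁ i : ℕ} {α : ℝ}

lemma siteBound_mul_sum_fiber_le_of_mem_block (hB : i ∈ block m j₁) (t : Bool × ℕ) :
    siteBound m j₁ α i * ∑ x ∈ siteValues i with coarsen m j₁ i x = t, siteWeight α i x ≤
      ∑ x ∈ {x ∈ siteValues i | SealsAt m j₁ i x} with coarsen m j₁ i x = t,
        siteWeight α i x := by
  by_cases ht : t = (false, 0)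
  · have hfiber : {x ∈ siteValues i | coarsen m j₁ i x = t} = univ ×ˢ Icc 1 (i - 1) := by
      simp [siteValues, coarsen, hB, ht]
    have hseal : {x ∈ {x ∈ siteValues i | SealsAt m j₁ i x} | coarsen m j₁ i x = t} =
        {false} ×ˢ Icc 1 (i - 1) := by
      ext ⟨c, v⟩
      have hlt : ¬ m * j₁ < i := fun h => notMem_block_of_lt h hB
      simp [siteValues, coarsen, hB, ht, SealsAt, hlt]
    rw [hfiber, hseal, sum_siteWeight_product _ subset_rfl, sum_siteWeight_product _ subset_rfl,
      siteBound, if_pos hB]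
    simp only [Fintype.sum_bool, sum_singleton, if_true, Bool.false_eq_true, if_false]
    exact le_of_eq (by ring)
  · simp [coarsen, hB, Ne.symm ht]

/-- A parent `u_i ≤ m j₁` is uniform on `[1, m j₁]`, so it avoids block `j₁` with probability
`1 - 1 / j₁`. -/
lemma siteBound_mul_sum_fiber_le_of_lt (hj₁ : 1 ≤ j₁) (hB : i ∉ block m j₁) (hlt : m * j₁ < i)
    (b : Bool) :
    siteBound m j₁ α i * ∑ x ∈ siteValues i with coarsen m j₁ i x = (b, 0), siteWeight α i x ≤
      ∑ x ∈ {x ∈ siteValues i | SealsAt m j₁ i x} with coarsen m j₁ i x = (b, 0),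
        siteWeight α i x := by
  have hmj : m * j₁ = m * (j₁ - 1) + m := by
    rw [← Nat.mul_succ]; congr 1; omega
  have hfiber : {x ∈ siteValues i | coarsen m j₁ i x = (b, 0)} = {b} ×ˢ Icc 1 (m * j₁) := by
    ext ⟨c, v⟩
    simp only [siteValues, coarsen, hB, if_false, mask, mem_filter, mem_product, mem_univ,
      true_and, mem_Icc, Prod.mk.injEq, mem_singleton]
    by_cases hc : c = b <;> split_ifs <;> simp [hc] <;> omega
  have hseal : {x ∈ {x ∈ siteValues i | SealsAt m j₁ i x} | coarsen m j₁ i x = (b, 0)} =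
      {b} ×ˢ Icc 1 (m * (j₁ - 1)) := by
    ext ⟨c, v⟩
    simp only [siteValues, coarsen, mask, SealsAt, block, mem_filter, mem_product, mem_univ,
      true_and, mem_Icc, mem_singleton, hlt, forall_const]
    by_cases hc : c = b <;> split_ifs <;> simp [hc] <;> omega
  rw [hfiber, hseal, sum_siteWeight_product _ (Icc_subset_Icc le_rfl (by omega)),
    sum_siteWeight_product _ (Icc_subset_Icc le_rfl (by omega)), Nat.card_Icc, Nat.card_Icc,
    Nat.add_sub_cancel, Nat.add_sub_cancel, siteBound, if_neg hB, if_pos hlt, hmj,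
    Nat.cast_add, Nat.cast_mul, Nat.cast_sub hj₁]
  have hj₁' : (j₁ : ℝ) ≠ 0 := by positivity
  refine le_of_eq ?_
  field_simp
  ring

lemma siteBound_mul_sum_fiber_le (hα0 : 0 ≤ α) (hα1 : α ≤ 1) (hj₁ : 1 ≤ j₁) (t : Bool × ℕ) :
    siteBound m j₁ α i * ∑ x ∈ siteValues i with coarsen m j₁ i x = t, siteWeight α i x ≤
      ∑ x ∈ {x ∈ siteValues i | SealsAt m j₁ i x} with coarsen m j₁ i x = t,
        siteWeight α i x := by
  have hw : ∀ x ∈ siteValues i, 0 ≤ siteWeight α i x := fun x _ => siteWeight_nonneg hα0 hα1 i x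
  by_cases hB : i ∈ block m j₁
  · exact siteBound_mul_sum_fiber_le_of_mem_block hB t
  by_cases hlt : m * j₁ < i
  · obtain ⟨b, l⟩ := t
    by_cases hl : l = 0
    · subst hl
      exact siteBound_mul_sum_fiber_le_of_lt hj₁ hB hlt b
    have hbound : siteBound m j₁ α i ≤ 1 := by
      simp only [siteBound, hB, hlt, if_false, if_true]
      linarith [show (0 : ℝ) ≤ 1 / j₁ by positivity]
    refine mul_sum_filter_le_of_forall hw hbound ?_
    rintro ⟨c, v⟩ _ hx
    simp only [coarsen, hB, if_false, Prod.mk.injEq, mask] at hx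
    refine ⟨fun h => absurd h hB, fun _ => notMem_block_of_lt ?_⟩
    split_ifs at hx <;> omega
  · exact mul_sum_filter_le_of_forall hw (by simp [siteBound, hB, hlt])
      fun x _ _ => ⟨fun h => absurd h hB, fun h => absurd h hlt⟩

end Fibers

lemma exp_neg_two_mul_le_one_sub {x : ℝ} (hx0 : 0 ≤ x) (hx : x ≤ 1 / 2) :
    Real.exp (-(2 * x)) ≤ 1 - x := by
  rw [Real.exp_neg, inv_le_comm₀ (Real.exp_pos _) (by linarith)]
  calc (1 - x)⁻¹ ≤ 1 + 2 * x := by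
        rw [inv_le_iff_one_le_mul₀ (by linarith)]
        nlinarith
    _ ≤ Real.exp (2 * x) := by linarith [Real.add_one_le_exp (2 * x)]

noncomputable def sealBound (m : ℕ) (α : ℝ) : ℝ := (1 - α) ^ m * Real.exp (-(2 * m))

section Moment

variable {m k j₁ : ℕ} {α : ℝ}

lemma sealBound_le_prod_siteBound (hα1 : α ≤ 1) (hj₁ : 2 ≤ j₁) (hj₁k : j₁ ≤ k)
    (hk : k ≤ 2 * j₁) : sealBound m α ≤ ∏ i : Icc 2 (k * m), siteBound m j₁ α i := by
  set q : ℝ := 1 - 1 / j₁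
  have hj₁' : (2 : ℝ) ≤ j₁ := by exact_mod_cast hj₁
  have hq0 : 0 ≤ q := by
    have : 1 / (j₁ : ℝ) ≤ 1 / 2 := one_div_le_one_div_of_le two_pos hj₁'
    linarith
  have hq1 : q ≤ 1 := by linarith [show (0 : ℝ) ≤ 1 / j₁ by positivity]
  have hsplit : ∀ i, siteBound m j₁ α i =
      (if i ∈ block m j₁ then 1 - α else 1) * (if m * j₁ < i then q else 1) := by
    intro i
    by_cases hB : i ∈ block m j₁
    · simp [siteBound, hB, show ¬ m * j₁ < i from fun h => notMem_block_of_lt h hB]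
    · simp [siteBound, hB, q]
  have hblock : block m j₁ ⊆ Icc 2 (k * m) := fun v hv =>
    mem_Icc.mpr ⟨two_le_of_mem_block hj₁ hv,
      (mem_Icc.mp hv).2.trans (by rw [mul_comm k]; exact Nat.mul_le_mul_left m hj₁k)⟩
  have hcard : #{i ∈ Icc 2 (k * m) | m * j₁ < i} ≤ m * j₁ := by
    refine ((card_le_card fun i hi => ?_).trans (Nat.card_Ioc (m * j₁) (k * m)).le).trans ?_
    · exact mem_Ioc.mpr ⟨(mem_filter.mp hi).2, (mem_Icc.mp (mem_filter.mp hi).1).2⟩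
    · have h := Nat.mul_le_mul_left m hk
      rw [show m * (2 * j₁) = 2 * (m * j₁) by ring] at h
      rw [mul_comm k]
      omega
  have hpow : Real.exp (-(2 * m)) ≤ q ^ (m * j₁) :=
    calc Real.exp (-(2 * m)) = Real.exp (-(2 * (1 / j₁))) ^ (m * j₁) := by
          rw [← Real.exp_nat_mul]
          congr 1
          push_cast
          field_simp
      _ ≤ q ^ (m * j₁) := pow_le_pow_left₀ (Real.exp_pos _).le
          (exp_neg_two_mul_le_one_sub (by positivity) (one_div_le_one_div_of_le two_pos hj₁')) _
  rw [prod_coe_sort (Icc 2 (k * m)) (siteBound m j₁ α), prod_congr rfl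
    fun i _ => hsplit i, prod_mul_distrib, prod_ite_mem,
    inter_eq_right.mpr hblock, prod_const, block, Nat.card_Icc, ← prod_filter,
    prod_const]
  have hm : m * j₁ + 1 - (m * (j₁ - 1) + 1) = m := by
    have : m * j₁ = m * (j₁ - 1) + m := by rw [← Nat.mul_succ]; congr 1; omega
    omega
  rw [hm]
  exact mul_le_mul_of_nonneg_left (hpow.trans (pow_le_pow_of_le_one hq0 hq1 hcard))
    (pow_nonneg (by linarith) m)

lemma sealBound_nonneg (hα1 : α ≤ 1) : 0 ≤ sealBound m α :=
  mul_nonneg (pow_nonneg (by linarith) m) (Real.exp_pos _).le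

lemma sealBound_le_one (hα0 : 0 ≤ α) (hα1 : α ≤ 1) : sealBound m α ≤ 1 :=
  mul_le_one₀ (pow_le_one₀ (by linarith) (by linarith))
    (Real.exp_pos _).le (Real.exp_le_one_iff.mpr (by simp))

/-- `E[2^(-N)]`, where `N` is the number of sealed blocks among `j₀, …, k` in `𝔽_{k m}`. -/
noncomputable def sealedMoment (m k j₀ : ℕ) (α : ℝ) : ℝ :=
  ∑ g ∈ configs (k * m), configWeight α g * (1 / 2) ^ sealedCount m (k * m) j₀ k g.toFun

lemma sealedMoment_nonneg (hα0 : 0 ≤ α) (hα1 : α ≤ 1) (j₀ : ℕ) : 0 ≤ sealedMoment m k j₀ α :=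
  sum_nonneg fun g _ => mul_nonneg (configWeight_nonneg hα0 hα1 g) (by positivity)

lemma sealedCount_eq_ite_add {n : ℕ} (hj₁k : j₁ ≤ k) (c : ℕ → Bool × ℕ) :
    sealedCount m n j₁ k c =
      (if IsSealedBlock m n j₁ c then 1 else 0) + sealedCount m n (j₁ + 1) k c := by
  rw [sealedCount, sealedCount, ← insert_Icc_add_one_left_eq_Icc hj₁k, filter_insert]
  split_ifs with h
  · rw [card_insert_of_notMem (by simp), add_comm]
  · rw [zero_add]

lemma sealedCount_coarsen {n : ℕ} (g : Config n) :
    sealedCount m n (j₁ + 1) k (Config.toFun fun i => coarsen m j₁ i (g i)) =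
      sealedCount m n (j₁ + 1) k g.toFun := by
  unfold sealedCount
  congr 1
  exact filter_congr fun j hj =>
    isSealedBlock_coarsen (Nat.lt_of_succ_le (mem_Icc.mp hj).1) g

/-- Conditionally on everything deciding the blocks above `j₁`, block `j₁` is sealed with
probability at least `sealBound m α`. -/
lemma sealBound_mul_sealedMoment_le (hα0 : 0 ≤ α) (hα1 : α ≤ 1) (hj₁ : 2 ≤ j₁) (hj₁k : j₁ ≤ k)
    (hk : k ≤ 2 * j₁) :
    sealBound m α * sealedMoment m k (j₁ + 1) α ≤
      ∑ g ∈ configs (k * m) with IsSealedBlock m (k * m) j₁ g.toFun,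
        configWeight α g * (1 / 2) ^ sealedCount m (k * m) (j₁ + 1) k g.toFun := by
  set n := k * m
  set R : Config n → ℝ := fun g => (1 / 2 : ℝ) ^ sealedCount m n (j₁ + 1) k g.toFun
  have hR : ∀ g : Config n, R (fun i => coarsen m j₁ i (g i)) = R g := fun g => by
    simp only [R, sealedCount_coarsen]
  have key := prod_mul_sum_le_sum_filter (V := fun i : Icc 2 n => siteValues i)
    (fun i x _ => siteWeight_nonneg hα0 hα1 i x) (fun i => coarsen m j₁ i)
    (fun i => SealsAt m j₁ i) (fun i => siteBound_nonneg hα1 (by omega) i)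
    (fun _ t => siteBound_mul_sum_fiber_le hα0 hα1 (by omega) t)
    (fun t => by positivity : ∀ t, 0 ≤ R t)
  simp only [hR] at key
  calc sealBound m α * sealedMoment m k (j₁ + 1) α
      ≤ (∏ i : Icc 2 n, siteBound m j₁ α i) * sealedMoment m k (j₁ + 1) α :=
        mul_le_mul_of_nonneg_right (sealBound_le_prod_siteBound hα1 hj₁ hj₁k hk)
          (sealedMoment_nonneg hα0 hα1 _)
    _ ≤ ∑ g ∈ configs n with ∀ i : Icc 2 n, SealsAt m j₁ i (g i), R g * configWeight α g := by
        rw [show sealedMoment m k (j₁ + 1) α = ∑ g ∈ configs n, R g * configWeight α g from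
          sum_congr rfl fun g _ => mul_comm _ _]
        exact key
    _ = ∑ g ∈ configs n with IsSealedBlock m n j₁ g.toFun, configWeight α g * R g := by
        rw [filter_congr fun g _ => (isSealedBlock_iff_forall_sealsAt g).symm]
        exact sum_congr rfl fun g _ => mul_comm _ _

lemma sealedMoment_le_mul (hα0 : 0 ≤ α) (hα1 : α ≤ 1) (hj₁ : 2 ≤ j₁) (hj₁k : j₁ ≤ k)
    (hk : k ≤ 2 * j₁) :
    sealedMoment m k j₁ α ≤ (1 - sealBound m α / 2) * sealedMoment m k (j₁ + 1) α := by
  have hsplit : sealedMoment m k j₁ α = sealedMoment m k (j₁ + 1) α -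
      1 / 2 * ∑ g ∈ configs (k * m) with IsSealedBlock m (k * m) j₁ g.toFun,
        configWeight α g * (1 / 2) ^ sealedCount m (k * m) (j₁ + 1) k g.toFun := by
    rw [sum_filter, mul_sum, sealedMoment, sealedMoment, ← sum_sub_distrib]
    refine sum_congr rfl fun g _ => ?_
    rw [sealedCount_eq_ite_add hj₁k, pow_add]
    split_ifs <;> ring
  rw [hsplit]
  linarith [sealBound_mul_sealedMoment_le (m := m) hα0 hα1 hj₁ hj₁k hk]

lemma sealedMoment_le_pow (hα0 : 0 ≤ α) (hα1 : α ≤ 1) (hk : 2 ≤ k) :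
    sealedMoment m k (k / 2 + 1) α ≤ (1 - sealBound m α / 2) ^ (k - k / 2) := by
  have hq : 0 ≤ 1 - sealBound m α / 2 := by linarith [sealBound_le_one (m := m) hα0 hα1]
  suffices h : ∀ d j₀, k / 2 + 1 ≤ j₀ → j₀ + d = k + 1 →
      sealedMoment m k j₀ α ≤ (1 - sealBound m α / 2) ^ d from h _ _ le_rfl (by omega)
  intro d
  induction d with
  | zero =>
    intro j₀ _ hj₀
    simp [sealedMoment, sealedCount, show j₀ = k + 1 by omega, sum_configWeight]
  | succ d ih =>
    intro j₀ hj₀ hd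
    calc sealedMoment m k j₀ α
        ≤ (1 - sealBound m α / 2) * sealedMoment m k (j₀ + 1) α :=
          sealedMoment_le_mul hα0 hα1 (by omega) (by omega) (by omega)
      _ ≤ (1 - sealBound m α / 2) * (1 - sealBound m α / 2) ^ d :=
          mul_le_mul_of_nonneg_left (ih _ (by omega) (by omega)) hq
      _ = (1 - sealBound m α / 2) ^ (d + 1) := (pow_succ' _ _).symm

lemma sum_configWeight_sealedCount_le (hα0 : 0 ≤ α) (hα1 : α ≤ 1) (j₀ : ℕ) (a : ℝ) :
    ∑ g ∈ configs (k * m) with (sealedCount m (k * m) j₀ k g.toFun : ℝ) ≤ a, configWeight α g ≤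
      Real.exp a * sealedMoment m k j₀ α := by
  rw [sealedMoment, mul_sum]
  refine (sum_le_sum fun g hg => ?_).trans (sum_le_sum_of_subset_of_nonneg (filter_subset _ _)
    fun g _ _ => by have := configWeight_nonneg hα0 hα1 g; positivity)
  set N := sealedCount m (k * m) j₀ k g.toFun
  have hN : (2 : ℝ) ^ N ≤ Real.exp a :=
    calc (2 : ℝ) ^ N ≤ Real.exp 1 ^ N :=
          pow_le_pow_left₀ zero_le_two (by linarith [Real.add_one_le_exp 1]) N
      _ = Real.exp N := by rw [← Real.exp_nat_mul, mul_one]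
      _ ≤ Real.exp a := Real.exp_le_exp.mpr (mem_filter.mp hg).2
  have hW := configWeight_nonneg hα0 hα1 g
  calc configWeight α g = configWeight α g * ((2 : ℝ) ^ N * (1 / 2) ^ N) := by
        rw [← mul_pow]; norm_num
    _ ≤ configWeight α g * (Real.exp a * (1 / 2) ^ N) := by gcongr
    _ = Real.exp a * (configWeight α g * (1 / 2) ^ N) := by ring

lemma exp_mul_pow_le {p : ℝ} (hp0 : 0 ≤ p) (hp1 : p ≤ 1) (k : ℕ) :
    Real.exp (p * k / 8) * (1 - p / 2) ^ (k - k / 2) ≤ Real.exp (-(p * k / 8)) := by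
  have hhalf : (k : ℝ) / 2 ≤ ((k - k / 2 : ℕ) : ℝ) := by
    rw [Nat.cast_sub (Nat.div_le_self k 2)]
    linarith [(Nat.cast_div_le : ((k / 2 : ℕ) : ℝ) ≤ k / 2)]
  have hpow : (1 - p / 2) ^ (k - k / 2) ≤ Real.exp (-(p * k / 4)) :=
    calc (1 - p / 2) ^ (k - k / 2) ≤ Real.exp (-(p / 2)) ^ (k - k / 2) :=
          pow_le_pow_left₀ (by linarith) (by linarith [Real.add_one_le_exp (-(p / 2))]) _
      _ = Real.exp (-(p / 2) * ((k - k / 2 : ℕ) : ℝ)) := by rw [← Real.exp_nat_mul, mul_comm]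
      _ ≤ Real.exp (-(p * k / 4)) := Real.exp_le_exp.mpr (by nlinarith)
  calc Real.exp (p * k / 8) * (1 - p / 2) ^ (k - k / 2)
      ≤ Real.exp (p * k / 8) * Real.exp (-(p * k / 4)) := by gcongr
    _ = Real.exp (-(p * k / 8)) := by rw [← Real.exp_add]; ring_nf

end Moment

end PercolatedForest

open PercolatedForest in
theorem block_isolated_count_bound_general (m : ℕ) :
    ∃ C₁ C₂ : ℝ, 0 < C₁ ∧ 0 < C₂ ∧
      ∀ α : ℝ, 0 ≤ α → α < 1 →
        ∀ (Ω : Type) [MeasurableSpace Ω] (P : Measure Ω) [IsProbabilityMeasure P]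
          (ξ : ℕ → Ω → Bool) (u : ℕ → Ω → ℕ) (root : ℕ → Ω → ℕ),
          ForestLaw P α ξ u → IsForestRoot ξ u root →
          ∀ k : ℕ, m ^ 2 + 1 < k →
            (P {ω | (blockIsolatedCount root m k ω : ℝ) ≤ C₁ * (1 - α) ^ m * k}).toReal ≤
              Real.exp (-(C₂ * (1 - α) ^ m * k)) := by
  refine ⟨Real.exp (-(2 * m)) / 8, Real.exp (-(2 * m)) / 8, by positivity, by positivity, ?_⟩
  intro α hα0 hα1 Ω _ P _ ξ u root hlaw hroot k hk
  have hk2 : 2 ≤ k := by nlinarith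
  have ha : Real.exp (-(2 * m)) / 8 * (1 - α) ^ m * k = sealBound m α * k / 8 := by
    unfold sealBound; ring
  rw [ha]
  calc (P {ω | (blockIsolatedCount root m k ω : ℝ) ≤ sealBound m α * k / 8}).toReal
      ≤ ∑ g ∈ configs (k * m) with
          (sealedCount m (k * m) (k / 2 + 1) k g.toFun : ℝ) ≤ sealBound m α * k / 8,
          configWeight α g :=
        measure_toReal_le_sum_configWeight hlaw _ _ fun ω hω hobs =>
          (Nat.cast_le.mpr (sealedCount_le_blockIsolatedCount hroot (by omega) hobs)).trans hω
    _ ≤ Real.exp (sealBound m α * k / 8) * (1 - sealBound m α / 2) ^ (k - k / 2) :=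
        (sum_configWeight_sealedCount_le hα0 hα1.le _ _).trans
          (mul_le_mul_of_nonneg_left (sealedMoment_le_pow hα0 hα1.le hk2) (Real.exp_pos _).le)
    _ ≤ Real.exp (-(sealBound m α * k / 8)) :=
        exp_mul_pow_le (sealBound_nonneg hα1.le) (sealBound_le_one hα0 hα1.le) k

/-- **Lemma 4.1.** For each positive integer `m` there are constants `C₁ = C₁(m) > 0` and
`C₂ = C₂(m) > 0` such that for every `α ∈ [0,1)` and every integer `k > m² + 1`,
`ℙ( I^{(m)}(k·m) ≤ C₁·(1−α)^m·k ) ≤ e^{−C₂·(1−α)^m·k}`. -/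
theorem block_isolated_count_bound (m : ℕ) (hm : 1 ≤ m) :
    ∃ C₁ C₂ : ℝ, 0 < C₁ ∧ 0 < C₂ ∧
      ∀ α : ℝ, 0 ≤ α → α < 1 →
        ∀ (Ω : Type) [MeasurableSpace Ω] (P : Measure Ω) [IsProbabilityMeasure P]
          (ξ : ℕ → Ω → Bool) (u : ℕ → Ω → ℕ) (root : ℕ → Ω → ℕ),
          ForestLaw P α ξ u → IsForestRoot ξ u root →
          ∀ k : ℕ, m ^ 2 + 1 < k →
            (P {ω | (blockIsolatedCount root m k ω : ℝ) ≤ C₁ * (1 - α) ^ m * k}).toReal ≤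
              Real.exp (-(C₂ * (1 - α) ^ m * k)) :=
  block_isolated_count_bound_general m
end
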